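/- arXiv:1905.11578 — 9 statements merged into one kernel-verified Lean document; each statement's English description precedes it below -/
import Mathlib

section
/- For every interval system 𝓘, every pillar assignment (P, ≺, c) of 𝓘, and every colour k, the subgraph of the overlap graph of 𝓘 induced by the intervals receiving colour k under φ_{(P,≺,c)} is a permutation graph. -/
open scoped Classical

/-- Two open intervals `(a,b)`, `(c,d)` overlap: they intersect and neither
contains the other. -/
def Overlap (I J : ℝ × ℝ) : Prop :=
  (I.1 < J.1 ∧ J.1 < I.2 ∧ I.2 < J.2) ∨ (J.1 < I.1 ∧ I.1 < J.2 ∧ J.2 < I.2)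

/-- An interval system: a finite set of open subintervals of `(0,1)` (encoded by
their endpoint pairs) such that no interval has `0` or `1` as an endpoint and no
two distinct intervals share an endpoint. -/
structure IsIntervalSystem (𝓘 : Finset (ℝ × ℝ)) : Prop where
  mem_Ioo : ∀ I ∈ 𝓘, 0 < I.1 ∧ I.1 < I.2 ∧ I.2 < 1
  ends_distinct : ∀ I ∈ 𝓘, ∀ J ∈ 𝓘, I ≠ J →
    I.1 ≠ J.1 ∧ I.1 ≠ J.2 ∧ I.2 ≠ J.1 ∧ I.2 ≠ J.2

/-- The overlap graph of an interval system. -/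
def overlapGraph (𝓘 : Finset (ℝ × ℝ)) : SimpleGraph {I // I ∈ 𝓘} where
  Adj I J := Overlap I.1 J.1
  symm := ⟨by intro I J h; unfold Overlap at *; tauto⟩
  loopless := ⟨by intro I h; rcases h with ⟨h1, _, _⟩ | ⟨h1, _, _⟩ <;> linarith⟩

/-- A pillar of an interval system: a point of `(0,1)` that is not an endpoint
of any interval. -/
def IsPillar (𝓘 : Finset (ℝ × ℝ)) (p : ℝ) : Prop :=
  0 < p ∧ p < 1 ∧ ∀ I ∈ 𝓘, p ≠ I.1 ∧ p ≠ I.2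

/-- A circle graph: a graph isomorphic to the overlap graph of an interval
system. -/
def IsCircleGraph {V : Type*} (G : SimpleGraph V) : Prop :=
  ∃ 𝓘 : Finset (ℝ × ℝ), IsIntervalSystem 𝓘 ∧ Nonempty (G ≃g overlapGraph 𝓘)

/-- A permutation graph: a graph isomorphic to the overlap graph of an interval
system admitting a pillar contained in every interval. -/
def IsPermutationGraph {V : Type*} (G : SimpleGraph V) : Prop :=
  ∃ 𝓘 : Finset (ℝ × ℝ), IsIntervalSystem 𝓘 ∧
    (∃ p, IsPillar 𝓘 p ∧ ∀ I ∈ 𝓘, I.1 < p ∧ p < I.2) ∧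
    Nonempty (G ≃g overlapGraph 𝓘)

/-- `I` is assigned to pillar `p` with respect to the pillar set `P` and the
total order on `P` given by the ranking function `r` (injective on `P`): `p` is
the `r`-least pillar of `P` contained in `I`. -/
def AssignedTo (P : Finset ℝ) (r : ℝ → ℕ) (I : ℝ × ℝ) (p : ℝ) : Prop :=
  p ∈ P ∧ I.1 < p ∧ p < I.2 ∧
    ∀ q ∈ P, I.1 < q → q < I.2 → q ≠ p → r p < r q

/-- A pillar assignment `(P, ≺, c)`: a finite set of pillars `P`, a total order
on `P` (encoded by a ranking `r` injective on `P`), and a colouring `c` such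
that overlapping intervals assigned to pillars of the same colour are assigned
to the same pillar. -/
structure IsPillarAssignment (𝓘 : Finset (ℝ × ℝ)) (P : Finset ℝ) (r : ℝ → ℕ)
    (c : ℝ → ℕ) : Prop where
  pillar : ∀ p ∈ P, IsPillar 𝓘 p
  inj : Set.InjOn r ↑P
  colour : ∀ I₁ ∈ 𝓘, ∀ I₂ ∈ 𝓘, Overlap I₁ I₂ → ∀ p₁ p₂,
    AssignedTo P r I₁ p₁ → AssignedTo P r I₂ p₂ → c p₁ = c p₂ → p₁ = p₂

/-- A pillar assignment is complete if every interval contains a pillar of `P`. -/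
def IsCompleteAssignment (𝓘 : Finset (ℝ × ℝ)) (P : Finset ℝ) : Prop :=
  ∀ I ∈ 𝓘, ∃ p ∈ P, I.1 < p ∧ p < I.2

/-- `(s,t)` is a segment of the finite set `Q ⊆ (0,1)`: a maximal open
subinterval of `(0,1) \ Q`. -/
def IsSegment (Q : Finset ℝ) (s t : ℝ) : Prop :=
  (s ∈ Q ∨ s = 0) ∧ (t ∈ Q ∨ t = 1) ∧ s < t ∧ ∀ q ∈ Q, q ≤ s ∨ t ≤ q

/-- The `P`-degree of `(p₁,p₂)`: the number of pairs of segments `(S₁, S₂)`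
with `S₁` a segment of `P` disjoint from `(p₁,p₂)`, `S₂` a segment of
`P ∪ {p₁,p₂}` contained in `(p₁,p₂)`, such that some interval of `𝓘` has one
endpoint in `S₁` and one endpoint in `S₂`. -/
noncomputable def PDeg (𝓘 : Finset (ℝ × ℝ)) (P : Finset ℝ) (p₁ p₂ : ℝ) : ℕ :=
  Set.ncard {x : (ℝ × ℝ) × (ℝ × ℝ) |
    IsSegment P x.1.1 x.1.2 ∧ (x.1.2 ≤ p₁ ∨ p₂ ≤ x.1.1) ∧
    IsSegment (P ∪ {p₁, p₂}) x.2.1 x.2.2 ∧ p₁ ≤ x.2.1 ∧ x.2.2 ≤ p₂ ∧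
    ∃ I ∈ 𝓘,
      (x.1.1 < I.1 ∧ I.1 < x.1.2 ∧ x.2.1 < I.2 ∧ I.2 < x.2.2) ∨
      (x.2.1 < I.1 ∧ I.1 < x.2.2 ∧ x.1.1 < I.2 ∧ I.2 < x.1.2)}

/-- The `(P,≺)`-degree of an open interval `(a,b)` contained in a segment of
`P`: the number of pillars `p ∈ P` such that some interval of `𝓘` with an
endpoint in `(a,b)` is assigned to `p`. -/
noncomputable def PrecDeg (𝓘 : Finset (ℝ × ℝ)) (P : Finset ℝ) (r : ℝ → ℕ)
    (a b : ℝ) : ℕ :=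
  Set.ncard {p : ℝ | ∃ I ∈ 𝓘,
    ((a < I.1 ∧ I.1 < b) ∨ (a < I.2 ∧ I.2 < b)) ∧ AssignedTo P r I p}

/-- The maximum degree of `(P,≺)` is at most `D`: every segment of `P` has
`(P,≺)`-degree at most `D`. -/
def MaxDegLE (𝓘 : Finset (ℝ × ℝ)) (P : Finset ℝ) (r : ℝ → ℕ) (D : ℕ) : Prop :=
  ∀ s t : ℝ, IsSegment P s t → PrecDeg 𝓘 P r s t ≤ D

/-- A graph is perfect if every induced subgraph has chromatic number equal to
its clique number. -/
def IsPerfect {V : Type*} (G : SimpleGraph V) : Prop :=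
  ∀ s : Set V, (G.induce s).chromaticNumber = ((G.induce s).cliqueNum : ℕ∞)


noncomputable def zA (n : ℕ) : ℝ := 1/2 - 1/(2*(n+2))

lemma zA_lt_zA {n m : ℕ} (h : n < m) : zA n < zA m := by
  unfold zA
  have h2 : (0:ℝ) < 2*((n:ℝ)+2) := by positivity
  have h3 : 2*((n:ℝ)+2) < 2*((m:ℝ)+2) := by
    have : (n:ℝ) < m := by exact_mod_cast h
    linarith
  have h4 := one_div_lt_one_div_of_lt h2 h3
  linarith

lemma zA_le_zA {n m : ℕ} (h : n ≤ m) : zA n ≤ zA m := by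
  rcases h.lt_or_eq with h | h
  · exact (zA_lt_zA h).le
  · simp [h]

lemma zA_lt_half (n : ℕ) : zA n < 1/2 := by
  have h : (0:ℝ) < 1/(2*((n:ℝ)+2)) := by positivity
  unfold zA; linarith

lemma quarter_le_zA (n : ℕ) : 1/4 ≤ zA n := by
  have h := zA_le_zA (Nat.zero_le n)
  have h0 : zA 0 = 1/4 := by unfold zA; norm_num
  linarith

lemma zd_pos (n : ℕ) : 0 < zA (n+1) - zA n := by
  have := zA_lt_zA (Nat.lt_succ_self n); linarith

noncomputable def fL (n : ℕ) (x : ℝ) : ℝ := zA n + x * (zA (n+1) - zA n)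
noncomputable def fR (n : ℕ) (x : ℝ) : ℝ := (1 - zA (n+1)) + x * (zA (n+1) - zA n)

lemma fL_lt_iff (n : ℕ) {x y : ℝ} : fL n x < fL n y ↔ x < y := by
  have hd := zd_pos n
  unfold fL
  constructor <;> intro h <;> nlinarith

lemma fR_lt_iff (n : ℕ) {x y : ℝ} : fR n x < fR n y ↔ x < y := by
  have hd := zd_pos n
  unfold fR
  constructor <;> intro h <;> nlinarith

lemma fL_mem {n : ℕ} {x : ℝ} (h0 : 0 < x) (h1 : x < 1) :
    zA n < fL n x ∧ fL n x < zA (n+1) := by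
  have hd := zd_pos n
  unfold fL
  constructor <;> nlinarith

lemma fR_mem {n : ℕ} {x : ℝ} (h0 : 0 < x) (h1 : x < 1) :
    1 - zA (n+1) < fR n x ∧ fR n x < 1 - zA n := by
  have hd := zd_pos n
  unfold fR
  constructor <;> nlinarith

lemma assigned_unique {P : Finset ℝ} {r : ℝ → ℕ} {I : ℝ × ℝ} {p q : ℝ}
    (hp : AssignedTo P r I p) (hq : AssignedTo P r I q) : p = q := by
  by_contra hne
  have h1 := hp.2.2.2 q hq.1 hq.2.1 hq.2.2.1 (Ne.symm hne)
  have h2 := hq.2.2.2 p hp.1 hp.2.1 hp.2.2.1 hne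
  omega

noncomputable def pilOf (P : Finset ℝ) (r c : ℝ → ℕ) (k : ℕ) (I : ℝ × ℝ) : ℝ :=
  if h : ∃ p, AssignedTo P r I p ∧ c p = k then h.choose else 0

lemma pilOf_eq {P : Finset ℝ} {r c : ℝ → ℕ} {k : ℕ} {I : ℝ × ℝ} {p : ℝ}
    (hp : AssignedTo P r I p) (hc : c p = k) : pilOf P r c k I = p := by
  have h : ∃ p, AssignedTo P r I p ∧ c p = k := ⟨p, hp, hc⟩
  rw [pilOf, dif_pos h]
  exact assigned_unique h.choose_spec.1 hp

noncomputable def fInt (P : Finset ℝ) (r c : ℝ → ℕ) (k : ℕ) (I : ℝ × ℝ) : ℝ × ℝ :=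
  (fL (r (pilOf P r c k I)) I.1, fR (r (pilOf P r c k I)) I.2)

/-- For every interval system, pillar assignment `(P, ≺, c)` and colour `k`,
the intervals coloured `k` by `φ_{(P,≺,c)}` induce a permutation graph in the
overlap graph. -/
theorem colour_class_isPermutationGraph (𝓘 : Finset (ℝ × ℝ))
    (h𝓘 : IsIntervalSystem 𝓘) (P : Finset ℝ) (r : ℝ → ℕ) (c : ℝ → ℕ)
    (hPA : IsPillarAssignment 𝓘 P r c) (k : ℕ) :
    IsPermutationGraph
      ((overlapGraph 𝓘).induce {I | ∃ p, AssignedTo P r I.1 p ∧ c p = k}) := by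
  
  classical
  set f := fInt P r c k with hf
  have hcls : ∀ I : ℝ × ℝ, I ∈ 𝓘 → (∃ p, AssignedTo P r I p ∧ c p = k) →
      AssignedTo P r I (pilOf P r c k I) ∧ c (pilOf P r c k I) = k ∧
      zA (r (pilOf P r c k I)) < (f I).1 ∧ (f I).1 < zA (r (pilOf P r c k I) + 1) ∧
      1 - zA (r (pilOf P r c k I) + 1) < (f I).2 ∧ (f I).2 < 1 - zA (r (pilOf P r c k I)) := by
    rintro I hI ⟨p, hp, hc⟩
    have he := pilOf_eq hp hc
    obtain ⟨h0, h1, h2⟩ := h𝓘.mem_Ioo I hI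
    refine ⟨he ▸ hp, he ▸ hc, ?_, ?_, ?_, ?_⟩
    · exact (fL_mem h0 (h1.trans h2)).1
    · exact (fL_mem h0 (h1.trans h2)).2
    · exact (fR_mem (h0.trans h1) h2).1
    · exact (fR_mem (h0.trans h1) h2).2
  have hnest : ∀ I ∈ 𝓘, ∀ J ∈ 𝓘, (∃ p, AssignedTo P r I p ∧ c p = k) →
      (∃ p, AssignedTo P r J p ∧ c p = k) →
      r (pilOf P r c k I) < r (pilOf P r c k J) →
      (f I).1 < (f J).1 ∧ (f J).2 < (f I).2 := by
    intro I hI J hJ hcI hcJ hlt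
    obtain ⟨_, _, hI1, hI2, hI3, hI4⟩ := hcls I hI hcI
    obtain ⟨_, _, hJ1, hJ2, hJ3, hJ4⟩ := hcls J hJ hcJ
    have h5 : zA (r (pilOf P r c k I) + 1) ≤ zA (r (pilOf P r c k J)) := zA_le_zA hlt
    constructor <;> linarith
  have hLne : ∀ I ∈ 𝓘, ∀ J ∈ 𝓘, (∃ p, AssignedTo P r I p ∧ c p = k) →
      (∃ p, AssignedTo P r J p ∧ c p = k) → I ≠ J → (f I).1 ≠ (f J).1 := by
    intro I hI J hJ hcI hcJ hne
    rcases lt_trichotomy (r (pilOf P r c k I)) (r (pilOf P r c k J)) with h | h | h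
    · exact ne_of_lt (hnest I hI J hJ hcI hcJ h).1
    · have hd := (h𝓘.ends_distinct I hI J hJ hne).1
      have e1 : (f I).1 = fL (r (pilOf P r c k I)) I.1 := rfl
      have e2 : (f J).1 = fL (r (pilOf P r c k I)) J.1 := by
        rw [hf]; show fL (r (pilOf P r c k J)) J.1 = _; rw [h]
      rw [e1, e2]
      rcases hd.lt_or_gt with h' | h'
      · exact ne_of_lt ((fL_lt_iff _).2 h')
      · exact ne_of_gt ((fL_lt_iff _).2 h')
    · exact ne_of_gt (hnest J hJ I hI hcJ hcI h).1
  have hRne : ∀ I ∈ 𝓘, ∀ J ∈ 𝓘, (∃ p, AssignedTo P r I p ∧ c p = k) →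
      (∃ p, AssignedTo P r J p ∧ c p = k) → I ≠ J → (f I).2 ≠ (f J).2 := by
    intro I hI J hJ hcI hcJ hne
    rcases lt_trichotomy (r (pilOf P r c k I)) (r (pilOf P r c k J)) with h | h | h
    · exact ne_of_gt (hnest I hI J hJ hcI hcJ h).2
    · have hd := (h𝓘.ends_distinct I hI J hJ hne).2.2.2
      have e1 : (f I).2 = fR (r (pilOf P r c k I)) I.2 := rfl
      have e2 : (f J).2 = fR (r (pilOf P r c k I)) J.2 := by
        rw [hf]; show fR (r (pilOf P r c k J)) J.2 = _; rw [h]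
      rw [e1, e2]
      rcases hd.lt_or_gt with h' | h'
      · exact ne_of_lt ((fR_lt_iff _).2 h')
      · exact ne_of_gt ((fR_lt_iff _).2 h')
    · exact ne_of_lt (hnest J hJ I hI hcJ hcI h).2
  have hadj : ∀ I ∈ 𝓘, ∀ J ∈ 𝓘, (∃ p, AssignedTo P r I p ∧ c p = k) →
      (∃ p, AssignedTo P r J p ∧ c p = k) → (Overlap I J ↔ Overlap (f I) (f J)) := by
    intro I hI J hJ hcI hcJ
    obtain ⟨hpI, hcolI, hI1, hI2, hI3, hI4⟩ := hcls I hI hcI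
    obtain ⟨hpJ, hcolJ, hJ1, hJ2, hJ3, hJ4⟩ := hcls J hJ hcJ
    by_cases hpq : pilOf P r c k I = pilOf P r c k J
    · have hn : r (pilOf P r c k I) = r (pilOf P r c k J) := by rw [hpq]
      have e1 : f I = (fL (r (pilOf P r c k I)) I.1, fR (r (pilOf P r c k I)) I.2) := rfl
      have e2 : f J = (fL (r (pilOf P r c k I)) J.1, fR (r (pilOf P r c k I)) J.2) := by
        rw [hf]; show (fL (r (pilOf P r c k J)) J.1, fR (r (pilOf P r c k J)) J.2) = _
        rw [hn]
      have hIp1 : I.1 < pilOf P r c k I := hpI.2.1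
      have hIp2 : pilOf P r c k I < I.2 := hpI.2.2.1
      have hJp1 : J.1 < pilOf P r c k I := hpq ▸ hpJ.2.1
      have hJp2 : pilOf P r c k I < J.2 := hpq ▸ hpJ.2.2.1
      have hh := zA_lt_half (r (pilOf P r c k I) + 1)
      rw [e2] at hJ2 hJ3
      rw [← hn] at hJ2 hJ3
      rw [e1] at hI2 hI3
      simp only [] at hJ2 hJ3 hI2 hI3
      rw [e1, e2]
      unfold Overlap
      simp only []
      constructor
      · rintro (⟨a, b, d⟩ | ⟨a, b, d⟩)
        · exact Or.inl ⟨(fL_lt_iff _).2 a, by linarith, (fR_lt_iff _).2 d⟩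
        · exact Or.inr ⟨(fL_lt_iff _).2 a, by linarith, (fR_lt_iff _).2 d⟩
      · rintro (⟨a, b, d⟩ | ⟨a, b, d⟩)
        · exact Or.inl ⟨(fL_lt_iff _).1 a, by linarith, (fR_lt_iff _).1 d⟩
        · exact Or.inr ⟨(fL_lt_iff _).1 a, by linarith, (fR_lt_iff _).1 d⟩
    · have hno : ¬ Overlap I J := fun hov =>
        hpq (hPA.colour I hI J hJ hov _ _ hpI hpJ (by rw [hcolI, hcolJ]))
      have hnm : r (pilOf P r c k I) ≠ r (pilOf P r c k J) := fun h =>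
        hpq (hPA.inj (Finset.mem_coe.2 hpI.1) (Finset.mem_coe.2 hpJ.1) h)
      have hnof : ¬ Overlap (f I) (f J) := by
        rcases hnm.lt_or_gt with h | h
        · obtain ⟨u, v⟩ := hnest I hI J hJ hcI hcJ h
          rintro (⟨a, b, d⟩ | ⟨a, b, d⟩) <;> linarith
        · obtain ⟨u, v⟩ := hnest J hJ I hI hcJ hcI h
          rintro (⟨a, b, d⟩ | ⟨a, b, d⟩) <;> linarith
      exact iff_of_false hno hnof
  set 𝓙 : Finset (ℝ × ℝ) :=
    (𝓘.filter (fun I => ∃ p, AssignedTo P r I p ∧ c p = k)).image f with h𝓙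
  have hmem𝓙 : ∀ J, J ∈ 𝓙 ↔ ∃ I, (I ∈ 𝓘 ∧ (∃ p, AssignedTo P r I p ∧ c p = k)) ∧ f I = J := by
    intro J
    simp [h𝓙, Finset.mem_image, Finset.mem_filter]
  refine ⟨𝓙, ⟨?_, ?_⟩, ⟨1/2, ⟨by norm_num, by norm_num, ?_⟩, ?_⟩, ⟨?_⟩⟩
  · intro J hJ
    obtain ⟨I, ⟨hI, hcI⟩, rfl⟩ := (hmem𝓙 J).1 hJ
    obtain ⟨_, _, h1, h2, h3, h4⟩ := hcls I hI hcI
    have q1 := quarter_le_zA (r (pilOf P r c k I))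
    have q2 := zA_lt_half (r (pilOf P r c k I) + 1)
    exact ⟨by linarith, by linarith, by linarith⟩
  · intro J hJ J' hJ' hne
    obtain ⟨I, ⟨hI, hcI⟩, rfl⟩ := (hmem𝓙 J).1 hJ
    obtain ⟨I', ⟨hI', hcI'⟩, rfl⟩ := (hmem𝓙 J').1 hJ'
    have hII : I ≠ I' := fun h => hne (by rw [h])
    obtain ⟨_, _, h1, h2, h3, h4⟩ := hcls I hI hcI
    obtain ⟨_, _, h1', h2', h3', h4'⟩ := hcls I' hI' hcI'
    have q2 := zA_lt_half (r (pilOf P r c k I) + 1)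
    have q2' := zA_lt_half (r (pilOf P r c k I') + 1)
    exact ⟨hLne I hI I' hI' hcI hcI' hII, by intro h; linarith [h ▸ h2],
      by intro h; linarith [h ▸ h3], hRne I hI I' hI' hcI hcI' hII⟩
  · intro J hJ
    obtain ⟨I, ⟨hI, hcI⟩, rfl⟩ := (hmem𝓙 J).1 hJ
    obtain ⟨_, _, h1, h2, h3, h4⟩ := hcls I hI hcI
    have q2 := zA_lt_half (r (pilOf P r c k I) + 1)
    refine ⟨fun h => ?_, fun h => ?_⟩
    · rw [← h] at h2; linarith
    · rw [← h] at h3; linarith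
  · intro J hJ
    obtain ⟨I, ⟨hI, hcI⟩, rfl⟩ := (hmem𝓙 J).1 hJ
    obtain ⟨_, _, h1, h2, h3, h4⟩ := hcls I hI hcI
    have q2 := zA_lt_half (r (pilOf P r c k I) + 1)
    constructor <;> linarith
  · refine ⟨Equiv.ofBijective
      (fun x => ⟨f x.1.1, (hmem𝓙 _).2 ⟨x.1.1, ⟨x.1.2, x.2⟩, rfl⟩⟩) ⟨?_, ?_⟩, ?_⟩
    · rintro ⟨⟨I, hI⟩, hcI⟩ ⟨⟨J, hJ⟩, hcJ⟩ h
      have hfe : f I = f J := congrArg Subtype.val h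
      by_contra hne
      have hIJ : I ≠ J := fun h' => hne (by subst h'; rfl)
      exact hLne I hI J hJ hcI hcJ hIJ (congrArg Prod.fst hfe)
    · rintro ⟨J, hJ⟩
      obtain ⟨I, ⟨hI, hcI⟩, rfl⟩ := (hmem𝓙 J).1 hJ
      exact ⟨⟨⟨I, hI⟩, hcI⟩, rfl⟩
    · rintro ⟨⟨I, hI⟩, hcI⟩ ⟨⟨J, hJ⟩, hcJ⟩
      exact (hadj I hI J hJ hcI hcJ).symm
end

section
/- Let 𝓘 be an interval system, let p₁ < p₂ be pillars of 𝓘, and suppose every interval of 𝓘 overlaps the interval (p₁, p₂) (i.e. contains exactly one of p₁, p₂). Then the overlap graph of 𝓘 is a permutation graph. -/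
open scoped Classical

/-- Auxiliary map sending each interval (crossing exactly one of `p₁ < p₂`) to a
new interval crossing the single pillar `1/2`. -/
noncomputable def pmap (p₁ p₂ : ℝ) (I : ℝ × ℝ) : ℝ × ℝ :=
  if I.1 < p₁ then ((p₂ - I.2) / (2 * (p₂ - p₁)), 3/4 - I.1 / (4 * p₁))
  else ((p₂ - I.1) / (2 * (p₂ - p₁)), 1 - (I.2 - p₂) / (4 * (1 - p₂)))

/-- If `p₁ < p₂` are pillars of an interval system and every interval contains
exactly one of `p₁`, `p₂`, then the overlap graph is a permutation graph. -/
theorem isPermutationGraph_of_spanning_pillars (𝓘 : Finset (ℝ × ℝ))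
    (h𝓘 : IsIntervalSystem 𝓘) (p₁ p₂ : ℝ) (hp₁ : IsPillar 𝓘 p₁)
    (hp₂ : IsPillar 𝓘 p₂) (hlt : p₁ < p₂)
    (hcover : ∀ I ∈ 𝓘, Xor' (I.1 < p₁ ∧ p₁ < I.2) (I.1 < p₂ ∧ p₂ < I.2)) :
    IsPermutationGraph (overlapGraph 𝓘) := by
  obtain ⟨hp10, hp11, hp1e⟩ := hp₁
  obtain ⟨hp20, hp21, hp2e⟩ := hp₂
  set F := pmap p₁ p₂ with hFdef
  have hD : (0:ℝ) < 2 * (p₂ - p₁) := by linarith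
  have h4 : (0:ℝ) < 4 * p₁ := by linarith
  have h4' : (0:ℝ) < 4 * (1 - p₂) := by linarith
  have hcmp : ∀ u v : ℝ, (p₂ - u) / (2 * (p₂ - p₁)) < (p₂ - v) / (2 * (p₂ - p₁)) ↔ v < u := by
    intro u v
    rw [div_lt_div_iff₀ hD hD]
    constructor <;> intro h <;> nlinarith
  have hy1 : ∀ u v : ℝ, 3/4 - u / (4 * p₁) < 3/4 - v / (4 * p₁) ↔ v < u := by
    intro u v
    rw [sub_lt_sub_iff_left, div_lt_div_iff₀ h4 h4]
    constructor <;> intro h <;> nlinarith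
  have hy2 : ∀ u v : ℝ, 1 - (u - p₂) / (4 * (1 - p₂)) < 1 - (v - p₂) / (4 * (1 - p₂)) ↔ v < u := by
    intro u v
    rw [sub_lt_sub_iff_left, div_lt_div_iff₀ h4' h4']
    constructor <;> intro h <;> nlinarith
  have hdi : ∀ I ∈ 𝓘, (I.1 < p₁ ∧ p₁ < I.2 ∧ I.2 < p₂) ∨ (p₁ < I.1 ∧ I.1 < p₂ ∧ p₂ < I.2) := by
    intro I hI
    rcases hcover I hI with ⟨⟨h1, h2⟩, hn⟩ | ⟨⟨h1, h2⟩, hn⟩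
    · left
      refine ⟨h1, h2, ?_⟩
      have h3 : ¬ p₂ < I.2 := fun hh => hn ⟨by linarith, hh⟩
      exact lt_of_le_of_ne (not_lt.1 h3) (Ne.symm (hp2e I hI).2)
    · right
      have h3 : ¬ I.1 < p₁ := fun hh => hn ⟨hh, by linarith⟩
      exact ⟨lt_of_le_of_ne (not_lt.1 h3) (hp1e I hI).1, h1, h2⟩
  have eF1 : ∀ I : ℝ × ℝ, I.1 < p₁ →
      F I = ((p₂ - I.2) / (2 * (p₂ - p₁)), 3/4 - I.1 / (4 * p₁)) := by
    intro I h; simp [hFdef, pmap, h]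
  have eF2 : ∀ I : ℝ × ℝ, p₁ < I.1 →
      F I = ((p₂ - I.1) / (2 * (p₂ - p₁)), 1 - (I.2 - p₂) / (4 * (1 - p₂))) := by
    intro I h; simp [hFdef, pmap, not_lt.2 h.le]
  have hF : ∀ I ∈ 𝓘, 0 < (F I).1 ∧ (F I).1 < 1/2 ∧ 1/2 < (F I).2 ∧ (F I).2 < 1 ∧
      (I.1 < p₁ → (F I).2 < 3/4) ∧ (p₁ < I.1 → 3/4 < (F I).2) := by
    intro I hI
    obtain ⟨hI0, hI12, hI1⟩ := h𝓘.mem_Ioo I hI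
    rcases hdi I hI with ⟨a1, a2, a3⟩ | ⟨a1, a2, a3⟩
    · rw [eF1 I a1]
      have hx0 : 0 < (p₂ - I.2) / (2 * (p₂ - p₁)) := div_pos (by linarith) hD
      have hx1 : (p₂ - I.2) / (2 * (p₂ - p₁)) < 1/2 := by rw [div_lt_iff₀ hD]; linarith
      have hyu : I.1 / (4 * p₁) < 1/4 := by rw [div_lt_iff₀ h4]; linarith
      have hyl : 0 < I.1 / (4 * p₁) := div_pos hI0 h4
      exact ⟨hx0, hx1, by linarith, by linarith, fun _ => by linarith,
        fun h => (lt_asymm a1 h).elim⟩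
    · rw [eF2 I a1]
      have hx0 : 0 < (p₂ - I.1) / (2 * (p₂ - p₁)) := div_pos (by linarith) hD
      have hx1 : (p₂ - I.1) / (2 * (p₂ - p₁)) < 1/2 := by rw [div_lt_iff₀ hD]; linarith
      have hyu : (I.2 - p₂) / (4 * (1 - p₂)) < 1/4 := by rw [div_lt_iff₀ h4']; linarith
      have hyl : 0 < (I.2 - p₂) / (4 * (1 - p₂)) := div_pos (by linarith) h4'
      exact ⟨hx0, hx1, by linarith, by linarith, fun h => (lt_asymm a1 h).elim,
        fun _ => by linarith⟩
  have hov : ∀ I ∈ 𝓘, ∀ J ∈ 𝓘, (Overlap (F I) (F J) ↔ Overlap I J) := by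
    intro I hI J hJ
    obtain ⟨qx0, qx1, qy0, qy1, qc1, qc2⟩ := hF I hI
    obtain ⟨rx0, rx1, ry0, ry1, rc1, rc2⟩ := hF J hJ
    simp only [Overlap]
    rcases hdi I hI with ⟨a1, a2, a3⟩ | ⟨a1, a2, a3⟩ <;>
      rcases hdi J hJ with ⟨b1, b2, b3⟩ | ⟨b1, b2, b3⟩
    · have c1 : ((F I).1 < (F J).1) ↔ J.2 < I.2 := by
        rw [eF1 I a1, eF1 J b1]; exact hcmp I.2 J.2
      have c2 : ((F J).1 < (F I).1) ↔ I.2 < J.2 := by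
        rw [eF1 I a1, eF1 J b1]; exact hcmp J.2 I.2
      have c3 : ((F I).2 < (F J).2) ↔ J.1 < I.1 := by
        rw [eF1 I a1, eF1 J b1]; exact hy1 I.1 J.1
      have c4 : ((F J).2 < (F I).2) ↔ I.1 < J.1 := by
        rw [eF1 I a1, eF1 J b1]; exact hy1 J.1 I.1
      constructor
      · rintro (⟨h1, h2, h3⟩ | ⟨h1, h2, h3⟩)
        · exact Or.inr ⟨c3.1 h3, by linarith, c1.1 h1⟩
        · exact Or.inl ⟨c4.1 h3, by linarith, c2.1 h1⟩
      · rintro (⟨h1, h2, h3⟩ | ⟨h1, h2, h3⟩)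
        · exact Or.inr ⟨c2.2 h3, by linarith, c4.2 h1⟩
        · exact Or.inl ⟨c1.2 h3, by linarith, c3.2 h1⟩
    · have c1 : ((F I).1 < (F J).1) ↔ J.1 < I.2 := by
        rw [eF1 I a1, eF2 J b1]; exact hcmp I.2 J.1
      have hq := qc1 a1
      have hr := rc2 b1
      constructor
      · rintro (⟨h1, h2, h3⟩ | ⟨h1, h2, h3⟩)
        · exact Or.inl ⟨by linarith, c1.1 h1, by linarith⟩
        · exfalso; linarith
      · rintro (⟨h1, h2, h3⟩ | ⟨h1, h2, h3⟩)
        · exact Or.inl ⟨c1.2 h2, by linarith, by linarith⟩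
        · exfalso; linarith
    · have c2 : ((F J).1 < (F I).1) ↔ I.1 < J.2 := by
        rw [eF2 I a1, eF1 J b1]; exact hcmp J.2 I.1
      have hq := qc2 a1
      have hr := rc1 b1
      constructor
      · rintro (⟨h1, h2, h3⟩ | ⟨h1, h2, h3⟩)
        · exfalso; linarith
        · exact Or.inr ⟨by linarith, c2.1 h1, by linarith⟩
      · rintro (⟨h1, h2, h3⟩ | ⟨h1, h2, h3⟩)
        · exfalso; linarith
        · exact Or.inr ⟨c2.2 h2, by linarith, by linarith⟩
    · have c1 : ((F I).1 < (F J).1) ↔ J.1 < I.1 := by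
        rw [eF2 I a1, eF2 J b1]; exact hcmp I.1 J.1
      have c2 : ((F J).1 < (F I).1) ↔ I.1 < J.1 := by
        rw [eF2 I a1, eF2 J b1]; exact hcmp J.1 I.1
      have c3 : ((F I).2 < (F J).2) ↔ J.2 < I.2 := by
        rw [eF2 I a1, eF2 J b1]; exact hy2 I.2 J.2
      have c4 : ((F J).2 < (F I).2) ↔ I.2 < J.2 := by
        rw [eF2 I a1, eF2 J b1]; exact hy2 J.2 I.2
      constructor
      · rintro (⟨h1, h2, h3⟩ | ⟨h1, h2, h3⟩)
        · exact Or.inr ⟨c1.1 h1, by linarith, c3.1 h3⟩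
        · exact Or.inl ⟨c2.1 h1, by linarith, c4.1 h3⟩
      · rintro (⟨h1, h2, h3⟩ | ⟨h1, h2, h3⟩)
        · exact Or.inr ⟨c2.2 h1, by linarith, c4.2 h3⟩
        · exact Or.inl ⟨c1.2 h1, by linarith, c3.2 h3⟩
  have hkey : ∀ I ∈ 𝓘, ∀ J ∈ 𝓘, I ≠ J → (F I).1 ≠ (F J).1 := by
    intro I hI J hJ hne heq
    obtain ⟨e1, e2, e3, e4⟩ := h𝓘.ends_distinct I hI J hJ hne
    rcases hdi I hI with ⟨a1, a2, a3⟩ | ⟨a1, a2, a3⟩ <;>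
      rcases hdi J hJ with ⟨b1, b2, b3⟩ | ⟨b1, b2, b3⟩
    · have c1 : ((F I).1 < (F J).1) ↔ J.2 < I.2 := by
        rw [eF1 I a1, eF1 J b1]; exact hcmp I.2 J.2
      have c2 : ((F J).1 < (F I).1) ↔ I.2 < J.2 := by
        rw [eF1 I a1, eF1 J b1]; exact hcmp J.2 I.2
      rcases lt_trichotomy I.2 J.2 with h | h | h
      · exact absurd heq (ne_of_gt (c2.2 h))
      · exact e4 h
      · exact absurd heq (ne_of_lt (c1.2 h))
    · have c1 : ((F I).1 < (F J).1) ↔ J.1 < I.2 := by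
        rw [eF1 I a1, eF2 J b1]; exact hcmp I.2 J.1
      have c2 : ((F J).1 < (F I).1) ↔ I.2 < J.1 := by
        rw [eF1 I a1, eF2 J b1]; exact hcmp J.1 I.2
      rcases lt_trichotomy I.2 J.1 with h | h | h
      · exact absurd heq (ne_of_gt (c2.2 h))
      · exact e3 h
      · exact absurd heq (ne_of_lt (c1.2 h))
    · have c1 : ((F I).1 < (F J).1) ↔ J.2 < I.1 := by
        rw [eF2 I a1, eF1 J b1]; exact hcmp I.1 J.2
      have c2 : ((F J).1 < (F I).1) ↔ I.1 < J.2 := by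
        rw [eF2 I a1, eF1 J b1]; exact hcmp J.2 I.1
      rcases lt_trichotomy I.1 J.2 with h | h | h
      · exact absurd heq (ne_of_gt (c2.2 h))
      · exact e2 h
      · exact absurd heq (ne_of_lt (c1.2 h))
    · have c1 : ((F I).1 < (F J).1) ↔ J.1 < I.1 := by
        rw [eF2 I a1, eF2 J b1]; exact hcmp I.1 J.1
      have c2 : ((F J).1 < (F I).1) ↔ I.1 < J.1 := by
        rw [eF2 I a1, eF2 J b1]; exact hcmp J.1 I.1
      rcases lt_trichotomy I.1 J.1 with h | h | h
      · exact absurd heq (ne_of_gt (c2.2 h))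
      · exact e1 h
      · exact absurd heq (ne_of_lt (c1.2 h))
  have hkey2 : ∀ I ∈ 𝓘, ∀ J ∈ 𝓘, I ≠ J → (F I).2 ≠ (F J).2 := by
    intro I hI J hJ hne heq
    obtain ⟨e1, e2, e3, e4⟩ := h𝓘.ends_distinct I hI J hJ hne
    obtain ⟨_, _, _, _, qc1, qc2⟩ := hF I hI
    obtain ⟨_, _, _, _, rc1, rc2⟩ := hF J hJ
    rcases hdi I hI with ⟨a1, a2, a3⟩ | ⟨a1, a2, a3⟩ <;>
      rcases hdi J hJ with ⟨b1, b2, b3⟩ | ⟨b1, b2, b3⟩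
    · have c3 : ((F I).2 < (F J).2) ↔ J.1 < I.1 := by
        rw [eF1 I a1, eF1 J b1]; exact hy1 I.1 J.1
      have c4 : ((F J).2 < (F I).2) ↔ I.1 < J.1 := by
        rw [eF1 I a1, eF1 J b1]; exact hy1 J.1 I.1
      rcases lt_trichotomy I.1 J.1 with h | h | h
      · exact absurd heq (ne_of_gt (c4.2 h))
      · exact e1 h
      · exact absurd heq (ne_of_lt (c3.2 h))
    · have := qc1 a1; have := rc2 b1; linarith
    · have := qc2 a1; have := rc1 b1; linarith
    · have c3 : ((F I).2 < (F J).2) ↔ J.2 < I.2 := by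
        rw [eF2 I a1, eF2 J b1]; exact hy2 I.2 J.2
      have c4 : ((F J).2 < (F I).2) ↔ I.2 < J.2 := by
        rw [eF2 I a1, eF2 J b1]; exact hy2 J.2 I.2
      rcases lt_trichotomy I.2 J.2 with h | h | h
      · exact absurd heq (ne_of_gt (c4.2 h))
      · exact e4 h
      · exact absurd heq (ne_of_lt (c3.2 h))
  have hinj : ∀ I ∈ 𝓘, ∀ J ∈ 𝓘, F I = F J → I = J := by
    intro I hI J hJ h
    by_contra hne
    exact hkey I hI J hJ hne (congrArg Prod.fst h)
  refine ⟨𝓘.image F, ⟨?_, ?_⟩, ⟨1/2, ⟨by norm_num, by norm_num, ?_⟩, ?_⟩, ⟨?_⟩⟩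
  · intro A hA
    obtain ⟨I, hI, rfl⟩ := Finset.mem_image.1 hA
    obtain ⟨x0, x1, y0, y1, _, _⟩ := hF I hI
    exact ⟨x0, by linarith, y1⟩
  · intro A hA B hB hAB
    obtain ⟨I, hI, rfl⟩ := Finset.mem_image.1 hA
    obtain ⟨J, hJ, rfl⟩ := Finset.mem_image.1 hB
    have hne : I ≠ J := fun h => hAB (by rw [h])
    obtain ⟨qx0, qx1, qy0, qy1, _, _⟩ := hF I hI
    obtain ⟨rx0, rx1, ry0, ry1, _, _⟩ := hF J hJ
    exact ⟨hkey I hI J hJ hne, ne_of_lt (by linarith), ne_of_gt (by linarith),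
      hkey2 I hI J hJ hne⟩
  · intro A hA
    obtain ⟨I, hI, rfl⟩ := Finset.mem_image.1 hA
    obtain ⟨qx0, qx1, qy0, qy1, _, _⟩ := hF I hI
    exact ⟨ne_of_gt (by linarith), ne_of_lt (by linarith)⟩
  · intro A hA
    obtain ⟨I, hI, rfl⟩ := Finset.mem_image.1 hA
    obtain ⟨qx0, qx1, qy0, qy1, _, _⟩ := hF I hI
    exact ⟨qx1, qy0⟩
  · refine ⟨Equiv.ofBijective
      (fun I => ⟨F I.1, Finset.mem_image_of_mem F I.2⟩) ⟨?_, ?_⟩, ?_⟩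
    · intro a b h
      exact Subtype.ext (hinj a.1 a.2 b.1 b.2 (congrArg Subtype.val h))
    · intro b
      obtain ⟨I, hI, hFI⟩ := Finset.mem_image.1 b.2
      exact ⟨⟨I, hI⟩, Subtype.ext hFI⟩
    · intro a b
      exact hov a.1 a.2 b.1 b.2
end

section
/- Let 𝓘 be an interval system whose overlap graph has clique number ω, let P be a finite set of pillars of 𝓘, and let p₁ < p₂ be elements of P. Then the P-degree of (p₁, p₂) is at most ω·|P|. -/
open scoped Classical

/-- A chain under the strict product order given by coordinates `x`, `y`. -/
def IsChn {α : Type*} (x y : α → ℤ) (C : Finset α) : Prop :=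
  ∀ c ∈ C, ∀ c' ∈ C, c ≠ c' → (x c < x c' ∧ y c < y c') ∨ (x c' < x c ∧ y c' < y c)

lemma isChn_singleton {α : Type*} (x y : α → ℤ) (e : α) : IsChn x y {e} := by
  intro c hc c' hc' hne
  rw [Finset.mem_singleton] at hc hc'
  exact absurd (hc.trans hc'.symm) hne

lemma isChn_insert_of_strict {α : Type*} [DecidableEq α] {x y : α → ℤ} {C : Finset α} {e : α}
    (hC : IsChn x y C) (hmin : ∀ c ∈ C, (x e < x c ∧ y e < y c) ∨ (x c < x e ∧ y c < y e)) :
    IsChn x y (insert e C) ∧ e ∉ C := by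
  constructor
  · intro c hc c' hc' hne
    rcases Finset.mem_insert.mp hc with hce | hcC
    · rcases Finset.mem_insert.mp hc' with hce' | hc'C
      · exact absurd (hce.trans hce'.symm) hne
      · rw [hce]; exact hmin c' hc'C
    · rcases Finset.mem_insert.mp hc' with hce' | hc'C
      · rw [hce']
        rcases hmin c hcC with h | h
        · exact Or.inr h
        · exact Or.inl h
      · exact hC c hcC c' hc'C hne
  · intro hmem
    rcases hmin e hmem with ⟨h, _⟩ | ⟨h, _⟩ <;> exact lt_irrefl _ h

theorem abstract_count {α : Type*} [DecidableEq α] (F G : Finset α)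
    (x y : α → ℤ) (n ω : ℕ)
    (hF : ∀ e ∈ F, 0 ≤ x e ∧ x e < y e ∧ y e ≤ (n : ℤ))
    (hG : ∀ e ∈ G, 0 ≤ y e ∧ y e < x e ∧ x e ≤ (n : ℤ))
    (hFinj : ∀ e ∈ F, ∀ e' ∈ F, x e = x e' → y e = y e' → e = e')
    (hGinj : ∀ e ∈ G, ∀ e' ∈ G, x e = x e' → y e = y e' → e = e')
    (H : ∀ C ⊆ F, ∀ D ⊆ G, IsChn x y C → IsChn x y D →
      (∀ c ∈ C, ∀ d ∈ D, y d < y c) → C.card + D.card ≤ ω) :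
    F.card + G.card ≤ ω * n := by
  classical
  set chF : α → Finset (Finset α) := fun e =>
    F.powerset.filter (fun C => IsChn x y C ∧ e ∈ C ∧
      ∀ c ∈ C, c = e ∨ (x e < x c ∧ y e < y c)) with hchF
  set chG : α → Finset (Finset α) := fun e =>
    G.powerset.filter (fun D => IsChn x y D ∧ e ∈ D ∧
      ∀ c ∈ D, c = e ∨ (x c < x e ∧ y c < y e)) with hchG
  set A : α → ℕ := fun e => (chF e).sup Finset.card with hA
  set B : α → ℕ := fun e => (chG e).sup Finset.card with hB
  have hchFmem : ∀ e C, C ∈ chF e ↔ (C ⊆ F ∧ IsChn x y C ∧ e ∈ C ∧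
      ∀ c ∈ C, c = e ∨ (x e < x c ∧ y e < y c)) := by
    intro e C
    simp only [hchF, Finset.mem_filter, Finset.mem_powerset]
  have hchGmem : ∀ e D, D ∈ chG e ↔ (D ⊆ G ∧ IsChn x y D ∧ e ∈ D ∧
      ∀ c ∈ D, c = e ∨ (x c < x e ∧ y c < y e)) := by
    intro e D
    simp only [hchG, Finset.mem_filter, Finset.mem_powerset]
  have hsingF : ∀ e ∈ F, {e} ∈ chF e := by
    intro e he
    rw [hchFmem]
    exact ⟨Finset.singleton_subset_iff.mpr he, isChn_singleton x y e,
      Finset.mem_singleton_self e, fun c hc => Or.inl (Finset.mem_singleton.mp hc)⟩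
  have hsingG : ∀ e ∈ G, {e} ∈ chG e := by
    intro e he
    rw [hchGmem]
    exact ⟨Finset.singleton_subset_iff.mpr he, isChn_singleton x y e,
      Finset.mem_singleton_self e, fun c hc => Or.inl (Finset.mem_singleton.mp hc)⟩
  have hA1 : ∀ e ∈ F, 1 ≤ A e := by
    intro e he
    have h := Finset.le_sup (f := Finset.card) (hsingF e he)
    rwa [Finset.card_singleton] at h
  have hB1 : ∀ e ∈ G, 1 ≤ B e := by
    intro e he
    have h := Finset.le_sup (f := Finset.card) (hsingG e he)
    rwa [Finset.card_singleton] at h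
  have hAattain : ∀ e ∈ F, ∃ C ∈ chF e, C.card = A e := by
    intro e he
    obtain ⟨C, hC, hCc⟩ := Finset.exists_mem_eq_sup (chF e) ⟨{e}, hsingF e he⟩ Finset.card
    exact ⟨C, hC, hCc.symm⟩
  have hBattain : ∀ e ∈ G, ∃ D ∈ chG e, D.card = B e := by
    intro e he
    obtain ⟨D, hD, hDc⟩ := Finset.exists_mem_eq_sup (chG e) ⟨{e}, hsingG e he⟩ Finset.card
    exact ⟨D, hD, hDc.symm⟩
  have hAω : ∀ e ∈ F, A e ≤ ω := by
    intro e he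
    obtain ⟨C, hC, hCc⟩ := hAattain e he
    rw [hchFmem] at hC
    have h := H C hC.1 ∅ (Finset.empty_subset G) hC.2.1 (by intro c hc; simp at hc)
      (by intro c _ d hd; simp at hd)
    rw [Finset.card_empty] at h
    omega
  have hBω : ∀ e ∈ G, B e ≤ ω := by
    intro e he
    obtain ⟨D, hD, hDc⟩ := hBattain e he
    rw [hchGmem] at hD
    have h := H ∅ (Finset.empty_subset F) D hD.1 (by intro c hc; simp at hc) hD.2.1
      (by intro c hc; simp at hc)
    rw [Finset.card_empty] at h
    omega
  have hAstep : ∀ e ∈ F, ∀ e' ∈ F, x e < x e' → y e < y e' → A e' < A e := by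
    intro e he e' he' hx hy
    obtain ⟨C, hC, hCc⟩ := hAattain e' he'
    rw [hchFmem] at hC
    obtain ⟨hCF, hCch, he'C, hCmin⟩ := hC
    have hmin : ∀ c ∈ C, (x e < x c ∧ y e < y c) ∨ (x c < x e ∧ y c < y e) := by
      intro c hc
      rcases hCmin c hc with hce | ⟨h1, h2⟩
      · rw [hce]; exact Or.inl ⟨hx, hy⟩
      · exact Or.inl ⟨hx.trans h1, hy.trans h2⟩
    obtain ⟨hchn, hnotmem⟩ := isChn_insert_of_strict hCch hmin
    have hins : insert e C ∈ chF e := by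
      rw [hchFmem]
      refine ⟨Finset.insert_subset he hCF, hchn, Finset.mem_insert_self e C, ?_⟩
      intro c hc
      rcases Finset.mem_insert.mp hc with hce | hcC
      · exact Or.inl hce
      · rcases hmin c hcC with h | ⟨h1, _⟩
        · exact Or.inr h
        · exact absurd h1 (by
            rcases hCmin c hcC with hce | ⟨h2, _⟩
            · rw [hce]; exact not_lt.mpr (le_of_lt hx)
            · exact not_lt.mpr (le_of_lt (hx.trans h2)))
    have hle : (insert e C).card ≤ A e := by
      rw [hA]; exact Finset.le_sup (f := Finset.card) hins
    have hcard : (insert e C).card = C.card + 1 := Finset.card_insert_of_notMem hnotmem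
    omega
  have hBstep : ∀ e ∈ G, ∀ e' ∈ G, x e < x e' → y e < y e' → B e < B e' := by
    intro e he e' he' hx hy
    obtain ⟨D, hD, hDc⟩ := hBattain e he
    rw [hchGmem] at hD
    obtain ⟨hDG, hDch, heD, hDmax⟩ := hD
    have hmin : ∀ c ∈ D, (x e' < x c ∧ y e' < y c) ∨ (x c < x e' ∧ y c < y e') := by
      intro c hc
      rcases hDmax c hc with hce | ⟨h1, h2⟩
      · rw [hce]; exact Or.inr ⟨hx, hy⟩
      · exact Or.inr ⟨h1.trans hx, h2.trans hy⟩
    obtain ⟨hchn, hnotmem⟩ := isChn_insert_of_strict hDch hmin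
    have hins : insert e' D ∈ chG e' := by
      rw [hchGmem]
      refine ⟨Finset.insert_subset he' hDG, hchn, Finset.mem_insert_self e' D, ?_⟩
      intro c hc
      rcases Finset.mem_insert.mp hc with hce | hcC
      · exact Or.inl hce
      · rcases hmin c hcC with ⟨h1, _⟩ | h
        · exact absurd h1 (by
            rcases hDmax c hcC with hce | ⟨h2, _⟩
            · rw [hce]; exact not_lt.mpr (le_of_lt hx)
            · exact not_lt.mpr (le_of_lt (h2.trans hx)))
        · exact Or.inr h
    have hle : (insert e' D).card ≤ B e' := by
      rw [hB]; exact Finset.le_sup (f := Finset.card) hins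
    have hcard : (insert e' D).card = D.card + 1 := Finset.card_insert_of_notMem hnotmem
    omega
  have hcross : ∀ e ∈ F, ∀ d ∈ G, y d < y e → A e + B d ≤ ω := by
    intro e he d hd hyd
    obtain ⟨C, hC, hCc⟩ := hAattain e he
    rw [hchFmem] at hC
    obtain ⟨hCF, hCch, heC, hCmin⟩ := hC
    obtain ⟨D, hD, hDc⟩ := hBattain d hd
    rw [hchGmem] at hD
    obtain ⟨hDG, hDch, hdD, hDmax⟩ := hD
    have h := H C hCF D hDG hCch hDch (by
      intro c hc d' hd'
      have h1 : y d' ≤ y d := by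
        rcases hDmax d' hd' with hce | ⟨_, h2⟩
        · rw [hce]
        · exact le_of_lt h2
      have h2 : y e ≤ y c := by
        rcases hCmin c hc with hce | ⟨_, h2⟩
        · rw [hce]
        · exact le_of_lt h2
      omega)
    omega
  have hFcard : F.card = ∑ t ∈ Finset.Icc 1 ω, (F.filter (fun e => A e = t)).card := by
    apply Finset.card_eq_sum_card_fiberwise
    intro e he
    exact Finset.mem_Icc.mpr ⟨hA1 e he, hAω e he⟩
  have hGcard : G.card = ∑ t ∈ Finset.Icc 1 ω, (G.filter (fun e => ω + 1 - B e = t)).card := by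
    apply Finset.card_eq_sum_card_fiberwise (f := fun e => ω + 1 - B e)
    intro e he
    have h1 := hB1 e he
    have h2 := hBω e he
    exact Finset.mem_Icc.mpr (by beta_reduce; omega)
  have hfiber : ∀ t ∈ Finset.Icc 1 ω,
      (F.filter (fun e => A e = t)).card + (G.filter (fun e => ω + 1 - B e = t)).card ≤ n := by
    intro t ht
    rw [Finset.mem_Icc] at ht
    rcases (F.filter (fun e => A e = t)).eq_empty_or_nonempty with hFte | hFtne
    · rw [hFte]
      rw [Finset.card_empty, Nat.zero_add]
      have hb : (G.filter (fun e => ω + 1 - B e = t)).card ≤ (Finset.Icc (-(n:ℤ)) (-1)).card := by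
        apply Finset.card_le_card_of_injOn (fun e => y e - x e)
        · intro e he
          simp only [Finset.mem_coe, Finset.mem_filter] at he
          obtain ⟨h1, h2, h3⟩ := hG e he.1
          rw [Finset.mem_coe, Finset.mem_Icc]; beta_reduce; omega
        · intro e he e' he' hv
          simp only [Finset.mem_coe, Finset.mem_filter] at he he'
          have hB1e := hB1 e he.1
          have hB1e' := hB1 e' he'.1
          have hBωe := hBω e he.1
          have hBωe' := hBω e' he'.1
          simp only at hv
          rcases lt_trichotomy (y e) (y e') with h | h | h
          · have hx : x e < x e' := by omega
            have := hBstep e he.1 e' he'.1 hx h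
            omega
          · have hx : x e = x e' := by omega
            exact hGinj e he.1 e' he'.1 hx h
          · have hx : x e' < x e := by omega
            have := hBstep e' he'.1 e he.1 hx h
            omega
      refine hb.trans ?_
      rw [Int.card_Icc]; omega
    · obtain ⟨emax, hemaxmem, hemaxj⟩ := Finset.exists_mem_eq_sup' hFtne y
      simp only [Finset.mem_filter] at hemaxmem
      have hemaxF : emax ∈ F := hemaxmem.1
      have hemaxA : A emax = t := hemaxmem.2
      have hj₀le : ∀ e ∈ F.filter (fun e => A e = t), y e ≤ y emax := by
        intro e he
        have := Finset.le_sup' y he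
        rw [hemaxj] at this
        exact this
      have hemaxbounds := hF emax hemaxF
      have hFtb : (F.filter (fun e => A e = t)).card ≤ (Finset.Icc (1:ℤ) (y emax)).card := by
        apply Finset.card_le_card_of_injOn (fun e => y e - x e)
        · intro e he
          have hyle := hj₀le e he
          simp only [Finset.mem_coe, Finset.mem_filter] at he
          obtain ⟨h1, h2, h3⟩ := hF e he.1
          rw [Finset.mem_coe, Finset.mem_Icc]; beta_reduce; omega
        · intro e he e' he' hv
          simp only [Finset.mem_coe, Finset.mem_filter] at he he'
          simp only at hv
          rcases lt_trichotomy (y e) (y e') with h | h | h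
          · have hx : x e < x e' := by omega
            have := hAstep e he.1 e' he'.1 hx h
            omega
          · have hx : x e = x e' := by omega
            exact hFinj e he.1 e' he'.1 hx h
          · have hx : x e' < x e := by omega
            have := hAstep e' he'.1 e he.1 hx h
            omega
      have hGtb : (G.filter (fun e => ω + 1 - B e = t)).card ≤
          (Finset.Icc (y emax - n) (-1:ℤ)).card := by
        apply Finset.card_le_card_of_injOn (fun e => y e - x e)
        · intro e he
          simp only [Finset.mem_coe, Finset.mem_filter] at he
          obtain ⟨h1, h2, h3⟩ := hG e he.1
          have hyj : y emax ≤ y e := by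
            by_contra hyc
            push_neg at hyc
            have hcr := hcross emax hemaxF e he.1 hyc
            have hB1e := hB1 e he.1
            have hBωe := hBω e he.1
            have := he.2
            omega
          rw [Finset.mem_coe, Finset.mem_Icc]; beta_reduce; omega
        · intro e he e' he' hv
          simp only [Finset.mem_coe, Finset.mem_filter] at he he'
          have hB1e := hB1 e he.1
          have hB1e' := hB1 e' he'.1
          have hBωe := hBω e he.1
          have hBωe' := hBω e' he'.1
          simp only at hv
          rcases lt_trichotomy (y e) (y e') with h | h | h
          · have hx : x e < x e' := by omega
            have := hBstep e he.1 e' he'.1 hx h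
            omega
          · have hx : x e = x e' := by omega
            exact hGinj e he.1 e' he'.1 hx h
          · have hx : x e' < x e := by omega
            have := hBstep e' he'.1 e he.1 hx h
            omega
      rw [Int.card_Icc] at hFtb hGtb
      have hy1 : 1 ≤ y emax := by omega
      have hyn : y emax ≤ (n : ℤ) := hemaxbounds.2.2
      omega
  rw [hFcard, hGcard, ← Finset.sum_add_distrib]
  have hsum := Finset.sum_le_sum hfiber
  refine hsum.trans ?_
  rw [Finset.sum_const, Nat.card_Icc, smul_eq_mul]
  have : ω + 1 - 1 = ω := by omega
  rw [this]

-- segment helper lemmas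
lemma seg_right_mem_of_lt {P : Finset ℝ} {s t s' t' : ℝ}
    (hP01 : ∀ p ∈ P, 0 < p ∧ p < 1)
    (h : IsSegment P s t) (h' : IsSegment P s' t') (hlt : s < s') : s' ∈ P := by
  rcases h'.1 with h1 | h1
  · exact h1
  · exfalso
    rcases h.1 with h2 | h2
    · have := (hP01 s h2).1; linarith
    · linarith

lemma seg_ordered {P : Finset ℝ} {s t s' t' : ℝ}
    (hP01 : ∀ p ∈ P, 0 < p ∧ p < 1)
    (h : IsSegment P s t) (h' : IsSegment P s' t') (hlt : s < s') : t ≤ s' := by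
  have hs'P : s' ∈ P := seg_right_mem_of_lt hP01 h h' hlt
  rcases h.2.2.2 s' hs'P with h1 | h1
  · linarith
  · exact h1

lemma seg_t_unique_aux {P : Finset ℝ} {s t t' : ℝ}
    (hP01 : ∀ p ∈ P, 0 < p ∧ p < 1)
    (h : IsSegment P s t) (h' : IsSegment P s t') (hlt : t < t') : False := by
  rcases h.2.1 with h1 | h1
  · rcases h'.2.2.2 t h1 with h2 | h2
    · linarith [h.2.2.1]
    · linarith
  · rcases h'.2.1 with h2 | h2
    · have := (hP01 t' h2).2; linarith
    · linarith

lemma seg_t_unique {P : Finset ℝ} {s t t' : ℝ}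
    (hP01 : ∀ p ∈ P, 0 < p ∧ p < 1)
    (h : IsSegment P s t) (h' : IsSegment P s t') : t = t' := by
  rcases lt_trichotomy t t' with hlt | he | hlt
  · exact absurd (seg_t_unique_aux hP01 h h' hlt) (fun f => f)
  · exact he
  · exact absurd (seg_t_unique_aux hP01 h' h hlt) (fun f => f)


/-- Turán-type bound: if the overlap graph of an interval system has clique
number `ω`, `P` is a finite set of pillars and `p₁ < p₂` lie in `P`, then the
`P`-degree of `(p₁, p₂)` is at most `ω · |P|`. -/
theorem pDeg_le_cliqueNum_mul_card (𝓘 : Finset (ℝ × ℝ))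
    (h𝓘 : IsIntervalSystem 𝓘) (ω : ℕ)
    (hω : (overlapGraph 𝓘).cliqueNum = ω) (P : Finset ℝ)
    (hP : ∀ p ∈ P, IsPillar 𝓘 p) (p₁ p₂ : ℝ) (hp₁ : p₁ ∈ P) (hp₂ : p₂ ∈ P)
    (hlt : p₁ < p₂) :
    PDeg 𝓘 P p₁ p₂ ≤ ω * P.card := by
  classical
  have hP01 : ∀ p ∈ P, 0 < p ∧ p < 1 := fun p hp => ⟨(hP p hp).1, (hP p hp).2.1⟩
  have hPU : P ∪ {p₁, p₂} = P := Finset.union_eq_left.mpr (by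
    intro q hq
    rcases Finset.mem_insert.mp hq with h | h
    · rw [h]; exact hp₁
    · rw [Finset.mem_singleton] at h; rw [h]; exact hp₂)
  rw [PDeg, hPU]
  set Z : Set ((ℝ × ℝ) × (ℝ × ℝ)) := {x : (ℝ × ℝ) × (ℝ × ℝ) |
    IsSegment P x.1.1 x.1.2 ∧ (x.1.2 ≤ p₁ ∨ p₂ ≤ x.1.1) ∧
    IsSegment P x.2.1 x.2.2 ∧ p₁ ≤ x.2.1 ∧ x.2.2 ≤ p₂ ∧
    ∃ I ∈ 𝓘,
      (x.1.1 < I.1 ∧ I.1 < x.1.2 ∧ x.2.1 < I.2 ∧ I.2 < x.2.2) ∨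
      (x.2.1 < I.1 ∧ I.1 < x.2.2 ∧ x.1.1 < I.2 ∧ I.2 < x.1.2)} with hZdef
  have hfin : Z.Finite := by
    apply Set.Finite.subset (Finset.finite_toSet
      (((insert (0:ℝ) P) ×ˢ (insert (1:ℝ) P)) ×ˢ ((insert (0:ℝ) P) ×ˢ (insert (1:ℝ) P))))
    rintro ⟨⟨s1, t1⟩, ⟨s2, t2⟩⟩ hz
    obtain ⟨h1, _, h3, _⟩ := hz
    have m1 : s1 ∈ insert (0:ℝ) P := by
      rcases h1.1 with h | h
      · exact Finset.mem_insert_of_mem h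
      · rw [show s1 = (0:ℝ) from h]; exact Finset.mem_insert_self _ _
    have m2 : t1 ∈ insert (1:ℝ) P := by
      rcases h1.2.1 with h | h
      · exact Finset.mem_insert_of_mem h
      · rw [show t1 = (1:ℝ) from h]; exact Finset.mem_insert_self _ _
    have m3 : s2 ∈ insert (0:ℝ) P := by
      rcases h3.1 with h | h
      · exact Finset.mem_insert_of_mem h
      · rw [show s2 = (0:ℝ) from h]; exact Finset.mem_insert_self _ _
    have m4 : t2 ∈ insert (1:ℝ) P := by
      rcases h3.2.1 with h | h
      · exact Finset.mem_insert_of_mem h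
      · rw [show t2 = (1:ℝ) from h]; exact Finset.mem_insert_self _ _
    exact Finset.mem_coe.mpr (Finset.mem_product.mpr
      ⟨Finset.mem_product.mpr ⟨m1, m2⟩, Finset.mem_product.mpr ⟨m3, m4⟩⟩)
  rw [Set.ncard_eq_toFinset_card _ hfin]
  set ZF := hfin.toFinset with hZF
  have hmemZ : ∀ z ∈ ZF, z ∈ Z := fun z hz => hfin.mem_toFinset.mp hz
  -- index function
  set idx : ℝ → ℤ := fun a => ((P.filter (fun q => q ≤ a)).card : ℤ) with hidx
  have hmono : ∀ a b : ℝ, a ≤ b → idx a ≤ idx b := by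
    intro a b hab
    simp only [hidx, Nat.cast_le]
    apply Finset.card_le_card
    intro q hq
    rw [Finset.mem_filter] at hq ⊢
    exact ⟨hq.1, hq.2.trans hab⟩
  have hstrict : ∀ a b : ℝ, a < b → b ∈ P → idx a < idx b := by
    intro a b hab hbP
    simp only [hidx, Nat.cast_lt]
    apply Finset.card_lt_card
    rw [Finset.ssubset_iff_of_subset]
    · exact ⟨b, Finset.mem_filter.mpr ⟨hbP, le_refl b⟩,
        fun hc => absurd (Finset.mem_filter.mp hc).2 (not_le.mpr hab)⟩
    · intro q hq
      rw [Finset.mem_filter] at hq ⊢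
      exact ⟨hq.1, hq.2.trans (le_of_lt hab)⟩
  have hlt_of_idx : ∀ a b : ℝ, idx a < idx b → a < b := by
    intro a b h
    by_contra hc
    push_neg at hc
    exact absurd (hmono b a hc) (not_le.mpr h)
  have hidx0 : ∀ a : ℝ, 0 ≤ idx a := fun a => Int.ofNat_nonneg _
  have hidxn : ∀ a : ℝ, idx a ≤ (P.card : ℤ) := by
    intro a
    simp only [hidx, Nat.cast_le]
    exact Finset.card_le_card (Finset.filter_subset _ _)
  -- injectivity of idx on segment left endpoints
  have hidxinj : ∀ {s t s' t' : ℝ}, IsSegment P s t → IsSegment P s' t' →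
      idx s = idx s' → s = s' := by
    intro s t s' t' h h' he
    rcases lt_trichotomy s s' with hc | hc | hc
    · exact absurd (hstrict s s' hc (seg_right_mem_of_lt hP01 h h' hc)) (by omega)
    · exact hc
    · exact absurd (hstrict s' s hc (seg_right_mem_of_lt hP01 h' h hc)) (by omega)
  -- split into left and right parts
  set Fl := ZF.filter (fun z => z.1.2 ≤ p₁) with hFl
  set Gr := ZF.filter (fun z => ¬ z.1.2 ≤ p₁) with hGr
  have hsplit : Fl.card + Gr.card = ZF.card :=
    Finset.card_filter_add_card_filter_not _
  have hGrright : ∀ z ∈ Gr, p₂ ≤ z.1.1 := by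
    intro z hz
    rw [hGr, Finset.mem_filter] at hz
    obtain ⟨_, h2, _⟩ := hmemZ z hz.1
    rcases h2 with h | h
    · exact absurd h hz.2
    · exact h
  -- witness function
  have hwex : ∀ z : (ℝ × ℝ) × (ℝ × ℝ), ∃ I : ℝ × ℝ, z ∈ ZF → I ∈ 𝓘 ∧
      ((z.1.1 < I.1 ∧ I.1 < z.1.2 ∧ z.2.1 < I.2 ∧ I.2 < z.2.2) ∨
       (z.2.1 < I.1 ∧ I.1 < z.2.2 ∧ z.1.1 < I.2 ∧ I.2 < z.1.2)) := by
    intro z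
    by_cases h : z ∈ ZF
    · obtain ⟨_, _, _, _, _, I, hI, hspec⟩ := hmemZ z h
      exact ⟨I, fun _ => ⟨hI, hspec⟩⟩
    · exact ⟨(0, 0), fun h' => absurd h' h⟩
  choose w hwspec using hwex
  have hwmem : ∀ z ∈ ZF, w z ∈ 𝓘 := fun z hz => (hwspec z hz).1
  have hwlt : ∀ z ∈ ZF, (w z).1 < (w z).2 := fun z hz =>
    ((h𝓘.mem_Ioo (w z) (hwmem z hz)).2.1)
  -- orientation for left and right elements
  have hwleft : ∀ z ∈ Fl, z.1.1 < (w z).1 ∧ (w z).1 < z.1.2 ∧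
      z.2.1 < (w z).2 ∧ (w z).2 < z.2.2 := by
    intro z hz
    rw [hFl, Finset.mem_filter] at hz
    obtain ⟨hzZ, hzl⟩ := hz
    obtain ⟨_, _, _, h4, _, _⟩ := hmemZ z hzZ
    rcases (hwspec z hzZ).2 with h | h
    · exact h
    · exact absurd (hwlt z hzZ) (by push_neg; linarith [h.1, h.2.2.2])
  have hwright : ∀ z ∈ Gr, z.2.1 < (w z).1 ∧ (w z).1 < z.2.2 ∧
      z.1.1 < (w z).2 ∧ (w z).2 < z.1.2 := by
    intro z hz
    have hzZ : z ∈ ZF := (Finset.mem_filter.mp (hGr ▸ hz)).1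
    have hp2le := hGrright z hz
    obtain ⟨_, _, _, _, h5, _⟩ := hmemZ z hzZ
    rcases (hwspec z hzZ).2 with h | h
    · exact absurd (hwlt z hzZ) (by push_neg; linarith [h.1, h.2.2.2])
    · exact h
  -- basic facts about members
  have hmemFl : ∀ z ∈ Fl, z ∈ ZF ∧ z.1.2 ≤ p₁ := by
    intro z hz
    rw [hFl, Finset.mem_filter] at hz
    exact hz
  have hmemGr : ∀ z ∈ Gr, z ∈ ZF ∧ p₂ ≤ z.1.1 := by
    intro z hz
    exact ⟨(Finset.mem_filter.mp (hGr ▸ hz)).1, hGrright z hz⟩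
  -- w is injective on ZF
  have hwinj : ∀ z ∈ ZF, ∀ z' ∈ ZF, w z = w z' → z = z' := by
    intro z hz z' hz' hw
    obtain ⟨hseg1, hor, hseg2, hs2p1, ht2p2, _⟩ := hmemZ z hz
    obtain ⟨hseg1', hor', hseg2', hs2p1', ht2p2', _⟩ := hmemZ z' hz'
    -- determine orientations
    have hzc : z ∈ Fl ∨ z ∈ Gr := by
      by_cases h : z.1.2 ≤ p₁
      · exact Or.inl (Finset.mem_filter.mpr ⟨hz, h⟩)
      · exact Or.inr (Finset.mem_filter.mpr ⟨hz, h⟩)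
    have hzc' : z' ∈ Fl ∨ z' ∈ Gr := by
      by_cases h : z'.1.2 ≤ p₁
      · exact Or.inl (Finset.mem_filter.mpr ⟨hz', h⟩)
      · exact Or.inr (Finset.mem_filter.mpr ⟨hz', h⟩)
    have hkey : ∀ {a b a' b' u : ℝ}, IsSegment P a b → IsSegment P a' b' →
        a < u → u < b → a' < u → u < b' → a = a' := by
      intro a b a' b' u ha hb h1 h2 h3 h4
      rcases lt_trichotomy a a' with hc | hc | hc
      · have := seg_ordered hP01 ha hb hc; linarith
      · exact hc
      · have := seg_ordered hP01 hb ha hc; linarith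
    rcases hzc with hzl | hzr
    · rcases hzc' with hzl' | hzr'
      · obtain ⟨a1, a2, a3, a4⟩ := hwleft z hzl
        obtain ⟨b1, b2, b3, b4⟩ := hwleft z' hzl'
        rw [hw] at a1 a2 a3 a4
        have e1 : z.1.1 = z'.1.1 := hkey hseg1 hseg1' a1 a2 b1 b2
        have e2 : z.2.1 = z'.2.1 := hkey hseg2 hseg2' a3 a4 b3 b4
        have e3 : z.1.2 = z'.1.2 := seg_t_unique hP01 (e1 ▸ hseg1) hseg1'
        have e4 : z.2.2 = z'.2.2 := seg_t_unique hP01 (e2 ▸ hseg2) hseg2'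
        exact Prod.ext (Prod.ext e1 e3) (Prod.ext e2 e4)
      · obtain ⟨a1, a2, a3, a4⟩ := hwleft z hzl
        obtain ⟨b1, b2, b3, b4⟩ := hwright z' hzr'
        rw [hw] at a1 a2
        have h1 : (w z').1 < p₁ := lt_of_lt_of_le a2 (hmemFl z hzl).2
        have h2 : p₁ < (w z').1 := lt_of_le_of_lt hs2p1' b1
        linarith
    · rcases hzc' with hzl' | hzr'
      · obtain ⟨a1, a2, a3, a4⟩ := hwright z hzr
        obtain ⟨b1, b2, b3, b4⟩ := hwleft z' hzl'
        rw [hw] at a1 a2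
        have h1 : (w z').1 < p₁ := lt_of_lt_of_le b2 (hmemFl z' hzl').2
        have h2 : p₁ < (w z').1 := lt_of_le_of_lt hs2p1 a1
        linarith
      · obtain ⟨a1, a2, a3, a4⟩ := hwright z hzr
        obtain ⟨b1, b2, b3, b4⟩ := hwright z' hzr'
        rw [hw] at a1 a2 a3 a4
        have e1 : z.2.1 = z'.2.1 := hkey hseg2 hseg2' a1 a2 b1 b2
        have e2 : z.1.1 = z'.1.1 := hkey hseg1 hseg1' a3 a4 b3 b4
        have e3 : z.1.2 = z'.1.2 := seg_t_unique hP01 (e2 ▸ hseg1) hseg1'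
        have e4 : z.2.2 = z'.2.2 := seg_t_unique hP01 (e1 ▸ hseg2) hseg2'
        exact Prod.ext (Prod.ext e2 e3) (Prod.ext e1 e4)
  -- overlap lemmas
  have hOLL : ∀ z ∈ Fl, ∀ z' ∈ Fl, z.1.1 < z'.1.1 → z.2.1 < z'.2.1 →
      Overlap (w z) (w z') := by
    intro z hz z' hz' h1 h2
    obtain ⟨hzZ, hzp⟩ := hmemFl z hz
    obtain ⟨hz'Z, hz'p⟩ := hmemFl z' hz'
    obtain ⟨hseg1, _, hseg2, hs2p1, ht2p2, _⟩ := hmemZ z hzZ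
    obtain ⟨hseg1', _, hseg2', hs2p1', ht2p2', _⟩ := hmemZ z' hz'Z
    obtain ⟨a1, a2, a3, a4⟩ := hwleft z hz
    obtain ⟨b1, b2, b3, b4⟩ := hwleft z' hz'
    have ho1 := seg_ordered hP01 hseg1 hseg1' h1
    have ho2 := seg_ordered hP01 hseg2 hseg2' h2
    exact Or.inl ⟨by linarith, by linarith, by linarith⟩
  have hORR : ∀ z ∈ Gr, ∀ z' ∈ Gr, z.1.1 < z'.1.1 → z.2.1 < z'.2.1 →
      Overlap (w z) (w z') := by
    intro z hz z' hz' h1 h2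
    obtain ⟨hzZ, hzp⟩ := hmemGr z hz
    obtain ⟨hz'Z, hz'p⟩ := hmemGr z' hz'
    obtain ⟨hseg1, _, hseg2, hs2p1, ht2p2, _⟩ := hmemZ z hzZ
    obtain ⟨hseg1', _, hseg2', hs2p1', ht2p2', _⟩ := hmemZ z' hz'Z
    obtain ⟨a1, a2, a3, a4⟩ := hwright z hz
    obtain ⟨b1, b2, b3, b4⟩ := hwright z' hz'
    have ho1 := seg_ordered hP01 hseg1 hseg1' h1
    have ho2 := seg_ordered hP01 hseg2 hseg2' h2
    exact Or.inl ⟨by linarith, by linarith, by linarith⟩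
  have hOLR : ∀ z ∈ Fl, ∀ z' ∈ Gr, z'.2.1 < z.2.1 → Overlap (w z) (w z') := by
    intro z hz z' hz' h2
    obtain ⟨hzZ, hzp⟩ := hmemFl z hz
    obtain ⟨hz'Z, hz'p⟩ := hmemGr z' hz'
    obtain ⟨hseg1, _, hseg2, hs2p1, ht2p2, _⟩ := hmemZ z hzZ
    obtain ⟨hseg1', _, hseg2', hs2p1', ht2p2', _⟩ := hmemZ z' hz'Z
    obtain ⟨a1, a2, a3, a4⟩ := hwleft z hz
    obtain ⟨b1, b2, b3, b4⟩ := hwright z' hz'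
    have ho2 := seg_ordered hP01 hseg2' hseg2 h2
    exact Or.inl ⟨by linarith, by linarith, by linarith⟩
  -- clique bound hypothesis for the abstract lemma
  rw [← hsplit]
  apply abstract_count Fl Gr (fun z => idx z.1.1) (fun z => idx z.2.1) P.card ω
  · intro z hz
    obtain ⟨hzZ, hzp⟩ := hmemFl z hz
    obtain ⟨hseg1, _, hseg2, hs2p1, _, _⟩ := hmemZ z hzZ
    refine ⟨hidx0 _, ?_, hidxn _⟩
    have h1 : z.1.1 < z.2.1 := by linarith [hseg1.2.2.1]
    have h2 : z.2.1 ∈ P := by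
      rcases hseg2.1 with h | h
      · exact h
      · exfalso; have := (hP01 p₁ hp₁).1; linarith
    exact hstrict _ _ h1 h2
  · intro z hz
    obtain ⟨hzZ, hzp⟩ := hmemGr z hz
    obtain ⟨hseg1, _, hseg2, hs2p1, ht2p2, _⟩ := hmemZ z hzZ
    refine ⟨hidx0 _, ?_, hidxn _⟩
    have h1 : z.2.1 < z.1.1 := by linarith [hseg2.2.2.1]
    have h2 : z.1.1 ∈ P := by
      rcases hseg1.1 with h | h
      · exact h
      · exfalso; have := (hP01 p₂ hp₂).1; linarith
    exact hstrict _ _ h1 h2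
  · intro z hz z' hz' hx hy
    obtain ⟨hzZ, _⟩ := hmemFl z hz
    obtain ⟨hz'Z, _⟩ := hmemFl z' hz'
    obtain ⟨hseg1, _, hseg2, _, _, _⟩ := hmemZ z hzZ
    obtain ⟨hseg1', _, hseg2', _, _, _⟩ := hmemZ z' hz'Z
    have e1 : z.1.1 = z'.1.1 := hidxinj hseg1 hseg1' hx
    have e2 : z.2.1 = z'.2.1 := hidxinj hseg2 hseg2' hy
    have e3 : z.1.2 = z'.1.2 := seg_t_unique hP01 (e1 ▸ hseg1) hseg1'
    have e4 : z.2.2 = z'.2.2 := seg_t_unique hP01 (e2 ▸ hseg2) hseg2'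
    exact Prod.ext (Prod.ext e1 e3) (Prod.ext e2 e4)
  · intro z hz z' hz' hx hy
    obtain ⟨hzZ, _⟩ := hmemGr z hz
    obtain ⟨hz'Z, _⟩ := hmemGr z' hz'
    obtain ⟨hseg1, _, hseg2, _, _, _⟩ := hmemZ z hzZ
    obtain ⟨hseg1', _, hseg2', _, _, _⟩ := hmemZ z' hz'Z
    have e1 : z.1.1 = z'.1.1 := hidxinj hseg1 hseg1' hx
    have e2 : z.2.1 = z'.2.1 := hidxinj hseg2 hseg2' hy
    have e3 : z.1.2 = z'.1.2 := seg_t_unique hP01 (e1 ▸ hseg1) hseg1'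
    have e4 : z.2.2 = z'.2.2 := seg_t_unique hP01 (e2 ▸ hseg2) hseg2'
    exact Prod.ext (Prod.ext e1 e3) (Prod.ext e2 e4)
  · -- the clique bound
    intro C hC D hD hCch hDch hcrossCD
    have hCZF : ∀ z ∈ C, z ∈ ZF := fun z hz => ((hmemFl z (hC hz)).1)
    have hDZF : ∀ z ∈ D, z ∈ ZF := fun z hz => ((hmemGr z (hD hz)).1)
    have hCDdisj : Disjoint C D := by
      apply Finset.disjoint_left.mpr
      intro z hzC hzD
      have h1 := (hmemFl z (hC hzC)).2
      have h2 := (hmemGr z (hD hzD)).2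
      obtain ⟨hseg1, _, _⟩ := hmemZ z (hCZF z hzC)
      linarith [hseg1.2.2.1]
    have hCDZF : ∀ z ∈ C ∪ D, z ∈ ZF := by
      intro z hz
      rcases Finset.mem_union.mp hz with h | h
      · exact hCZF z h
      · exact hDZF z h
    -- adjacency
    have hadj : ∀ z ∈ C ∪ D, ∀ z' ∈ C ∪ D, z ≠ z' → Overlap (w z) (w z') := by
      intro z hz z' hz' hne
      rcases Finset.mem_union.mp hz with hzC | hzD
      · rcases Finset.mem_union.mp hz' with hz'C | hz'D
        · rcases hCch z hzC z' hz'C hne with ⟨h1, h2⟩ | ⟨h1, h2⟩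
          · exact hOLL z (hC hzC) z' (hC hz'C) (hlt_of_idx _ _ h1) (hlt_of_idx _ _ h2)
          · rcases hOLL z' (hC hz'C) z (hC hzC) (hlt_of_idx _ _ h1) (hlt_of_idx _ _ h2)
              with h | h
            · exact Or.inr h
            · exact Or.inl h
        · exact hOLR z (hC hzC) z' (hD hz'D) (hlt_of_idx _ _ (hcrossCD z hzC z' hz'D))
      · rcases Finset.mem_union.mp hz' with hz'C | hz'D
        · rcases hOLR z' (hC hz'C) z (hD hzD) (hlt_of_idx _ _ (hcrossCD z' hz'C z hzD))
            with h | h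
          · exact Or.inr h
          · exact Or.inl h
        · rcases hDch z hzD z' hz'D hne with ⟨h1, h2⟩ | ⟨h1, h2⟩
          · exact hORR z (hD hzD) z' (hD hz'D) (hlt_of_idx _ _ h1) (hlt_of_idx _ _ h2)
          · rcases hORR z' (hD hz'D) z (hD hzD) (hlt_of_idx _ _ h1) (hlt_of_idx _ _ h2)
              with h | h
            · exact Or.inr h
            · exact Or.inl h
    -- build the clique finset
    set f : {a // a ∈ C ∪ D} → {I // I ∈ 𝓘} :=
      fun z => ⟨w z.1, hwmem z.1 (hCDZF z.1 z.2)⟩ with hf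
    set S : Finset {I // I ∈ 𝓘} := (C ∪ D).attach.image f with hS
    have hScard : S.card = C.card + D.card := by
      rw [hS, Finset.card_image_of_injOn, Finset.card_attach]
      · exact Finset.card_union_of_disjoint hCDdisj
      · intro a _ b _ hab
        have : w a.1 = w b.1 := congrArg Subtype.val hab
        exact Subtype.ext (hwinj a.1 (hCDZF a.1 a.2) b.1 (hCDZF b.1 b.2) this)
    have hclq : (overlapGraph 𝓘).IsClique (S : Set {I // I ∈ 𝓘}) := by
      intro a ha b hb hab
      rw [hS] at ha hb
      simp only [Finset.coe_image, Set.mem_image, Finset.mem_coe,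
        Finset.mem_attach, true_and] at ha hb
      obtain ⟨za, hza⟩ := ha
      obtain ⟨zb, hzb⟩ := hb
      have hzne : za.1 ≠ zb.1 := by
        intro h
        exact hab (by rw [← hza, ← hzb]; exact congrArg f (Subtype.ext h))
      have hov : Overlap ((f za).1) ((f zb).1) := hadj za.1 za.2 zb.1 zb.2 hzne
      rw [hza, hzb] at hov
      exact hov
    have hle : S.card ≤ (overlapGraph 𝓘).cliqueNum :=
      SimpleGraph.IsClique.card_le_cliqueNum (tc := hclq)
    rw [hω] at hle
    omega
end

section
/- Let 𝓘 be an interval system whose overlap graph has clique number 1 (i.e. no two intervals of 𝓘 overlap), let P be a finite set of pillars of 𝓘, and let p₁ < p₂ be elements of P. Then the P-degree of (p₁, p₂) is at most |P|. -/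
open scoped Classical

section helpers
lemma seg_mono {Q : Finset ℝ} (hQ : ∀ q ∈ Q, 0 < q ∧ q < 1)
    {s t s' t' u u' : ℝ} (h : IsSegment Q s t) (h' : IsSegment Q s' t')
    (hu1 : s < u) (hu2 : u < t) (hu1' : s' < u') (hu2' : u' < t')
    (huu : u ≤ u') : s ≤ s' ∧ t ≤ t' := by
  obtain ⟨hs, ht, hst, hmax⟩ := h
  obtain ⟨hs', ht', hst', hmax'⟩ := h'
  constructor
  · rcases hs with hsQ | hs0
    · rcases hmax' s hsQ with h1 | h1
      · exact h1
      · linarith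
    · rcases hs' with hsQ' | hs0'
      · linarith [(hQ s' hsQ').1]
      · linarith
  · rcases ht' with htQ' | ht1'
    · rcases hmax t' htQ' with h1 | h1
      · linarith
      · exact h1
    · rcases ht with htQ | ht1
      · linarith [(hQ t htQ).2]
      · linarith

lemma seg_eq {Q : Finset ℝ} (hQ : ∀ q ∈ Q, 0 < q ∧ q < 1)
    {s t s' t' u : ℝ} (h : IsSegment Q s t) (h' : IsSegment Q s' t')
    (hu1 : s < u) (hu2 : u < t) (hu1' : s' < u) (hu2' : u < t') :
    s = s' ∧ t = t' := by
  obtain ⟨a, b⟩ := seg_mono hQ h h' hu1 hu2 hu1' hu2' le_rfl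
  obtain ⟨c, d⟩ := seg_mono hQ h' h hu1' hu2' hu1 hu2 le_rfl
  exact ⟨le_antisymm a c, le_antisymm b d⟩

lemma seg_right_unique {Q : Finset ℝ} (hQ : ∀ q ∈ Q, 0 < q ∧ q < 1)
    {s s' t : ℝ} (h : IsSegment Q s t) (h' : IsSegment Q s' t) : s = s' := by
  set u := (max s s' + t) / 2 with hu
  have h1 : max s s' < t := max_lt h.2.2.1 h'.2.2.1
  have h2 : max s s' < u := by rw [hu]; linarith
  have h3 : u < t := by rw [hu]; linarith
  exact (seg_eq hQ h h' (lt_of_le_of_lt (le_max_left _ _) h2) h3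
    (lt_of_le_of_lt (le_max_right _ _) h2) h3).1

lemma seg_left_unique {Q : Finset ℝ} (hQ : ∀ q ∈ Q, 0 < q ∧ q < 1)
    {s t t' : ℝ} (h : IsSegment Q s t) (h' : IsSegment Q s t') : t = t' := by
  set u := (s + min t t') / 2 with hu
  have h1 : s < min t t' := lt_min h.2.2.1 h'.2.2.1
  have h2 : s < u := by rw [hu]; linarith
  have h3 : u < min t t' := by rw [hu]; linarith
  exact (seg_eq hQ h h' h2 (lt_of_lt_of_le h3 (min_le_left _ _)) h2
    (lt_of_lt_of_le h3 (min_le_right _ _))).2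

lemma chain_card (A B : Finset ℝ) (X : Finset (ℝ × ℝ))
    (hA : ∀ x ∈ X, x.1 ∈ A) (hB : ∀ x ∈ X, x.2 ∈ B)
    (hAne : A.Nonempty) (hBne : B.Nonempty)
    (hchain : ∀ x ∈ X, ∀ y ∈ X, x ≠ y →
      (x.1 ≤ y.1 ∧ y.2 ≤ x.2) ∨ (y.1 ≤ x.1 ∧ x.2 ≤ y.2)) :
    X.card + 1 ≤ A.card + B.card := by
  classical
  set f : ℝ × ℝ → ℕ := fun x => (A.filter (· ≤ x.1)).card + (B.filter (x.2 ≤ ·)).card with hf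
  have key : ∀ x ∈ X, ∀ y ∈ X, (x.1 ≤ y.1 ∧ y.2 ≤ x.2) → x ≠ y → f x < f y := by
    intro x hx y hy ⟨h1, h2⟩ hne
    have hsub1 : A.filter (· ≤ x.1) ⊆ A.filter (· ≤ y.1) := by
      intro a ha; simp only [Finset.mem_filter] at *; exact ⟨ha.1, le_trans ha.2 h1⟩
    have hsub2 : B.filter (x.2 ≤ ·) ⊆ B.filter (y.2 ≤ ·) := by
      intro b hb; simp only [Finset.mem_filter] at *; exact ⟨hb.1, le_trans h2 hb.2⟩
    have hstrict : x.1 < y.1 ∨ y.2 < x.2 := by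
      rcases lt_or_eq_of_le h1 with h | h
      · exact Or.inl h
      rcases lt_or_eq_of_le h2 with h' | h'
      · exact Or.inr h'
      · exact absurd (Prod.ext h h'.symm) hne
    rcases hstrict with h | h
    · have : A.filter (· ≤ x.1) ⊂ A.filter (· ≤ y.1) := by
        refine ⟨hsub1, fun hc => ?_⟩
        have := hc (Finset.mem_filter.mpr ⟨hA y hy, le_rfl⟩)
        simp only [Finset.mem_filter] at this; linarith
      have := Finset.card_lt_card this
      have := Finset.card_le_card hsub2
      simp only [hf]; omega
    · have : B.filter (x.2 ≤ ·) ⊂ B.filter (y.2 ≤ ·) := by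
        refine ⟨hsub2, fun hc => ?_⟩
        have := hc (Finset.mem_filter.mpr ⟨hB y hy, le_rfl⟩)
        simp only [Finset.mem_filter] at this; linarith
      have := Finset.card_lt_card this
      have := Finset.card_le_card hsub1
      simp only [hf]; omega
  have hinj : Set.InjOn f ↑X := by
    intro x hx y hy hfeq
    by_contra hne
    rcases hchain x hx y hy hne with h | h
    · exact absurd hfeq (ne_of_lt (key x hx y hy h hne))
    · exact absurd hfeq.symm (ne_of_lt (key y hy x hx h (Ne.symm hne)))
  have himg : X.image f ⊆ Finset.Icc 2 (A.card + B.card) := by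
    intro n hn
    obtain ⟨x, hx, rfl⟩ := Finset.mem_image.mp hn
    have h1 : 1 ≤ (A.filter (· ≤ x.1)).card :=
      Finset.card_pos.mpr ⟨x.1, Finset.mem_filter.mpr ⟨hA x hx, le_rfl⟩⟩
    have h2 : 1 ≤ (B.filter (x.2 ≤ ·)).card :=
      Finset.card_pos.mpr ⟨x.2, Finset.mem_filter.mpr ⟨hB x hx, le_rfl⟩⟩
    have h3 : (A.filter (· ≤ x.1)).card ≤ A.card := Finset.card_filter_le _ _
    have h4 : (B.filter (x.2 ≤ ·)).card ≤ B.card := Finset.card_filter_le _ _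
    simp only [Finset.mem_Icc, hf]; omega
  have h5 : X.card = (X.image f).card := (Finset.card_image_of_injOn hinj).symm
  have h6 := Finset.card_le_card himg
  rw [Nat.card_Icc] at h6
  have hA1 : 1 ≤ A.card := Finset.card_pos.mpr hAne
  have hB1 : 1 ≤ B.card := Finset.card_pos.mpr hBne
  omega
end helpers

/-- If no two intervals of an interval system overlap (clique number one), `P`
is a finite set of pillars and `p₁ < p₂` lie in `P`, then the `P`-degree of
`(p₁, p₂)` is at most `|P|`. -/
theorem pDeg_le_card_of_no_overlap (𝓘 : Finset (ℝ × ℝ))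
    (h𝓘 : IsIntervalSystem 𝓘)
    (hno : ∀ I ∈ 𝓘, ∀ J ∈ 𝓘, ¬ Overlap I J) (P : Finset ℝ)
    (hP : ∀ p ∈ P, IsPillar 𝓘 p) (p₁ p₂ : ℝ) (hp₁ : p₁ ∈ P) (hp₂ : p₂ ∈ P)
    (hlt : p₁ < p₂) :
    PDeg 𝓘 P p₁ p₂ ≤ P.card := by
  classical
  have hQP : P ∪ ({p₁, p₂} : Finset ℝ) = P := by
    rw [Finset.union_eq_left]
    intro q hq
    simp only [Finset.mem_insert, Finset.mem_singleton] at hq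
    rcases hq with rfl | rfl <;> assumption
  have hQ0 : ∀ q ∈ P, 0 < q ∧ q < 1 := fun q hq => ⟨(hP q hq).1, (hP q hq).2.1⟩
  have hp₁0 : 0 < p₁ := (hP p₁ hp₁).1
  have hp₂1 : p₂ < 1 := (hP p₂ hp₂).2.1
  unfold PDeg
  rw [hQP]
  set X : Set ((ℝ × ℝ) × (ℝ × ℝ)) := {x : (ℝ × ℝ) × (ℝ × ℝ) |
    IsSegment P x.1.1 x.1.2 ∧ (x.1.2 ≤ p₁ ∨ p₂ ≤ x.1.1) ∧
    IsSegment P x.2.1 x.2.2 ∧ p₁ ≤ x.2.1 ∧ x.2.2 ≤ p₂ ∧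
    ∃ I ∈ 𝓘,
      (x.1.1 < I.1 ∧ I.1 < x.1.2 ∧ x.2.1 < I.2 ∧ I.2 < x.2.2) ∨
      (x.2.1 < I.1 ∧ I.1 < x.2.2 ∧ x.1.1 < I.2 ∧ I.2 < x.1.2)} with hXdef
  set XL : Set ((ℝ × ℝ) × (ℝ × ℝ)) := {x ∈ X | x.1.2 ≤ p₁} with hXLdef
  set XR : Set ((ℝ × ℝ) × (ℝ × ℝ)) := {x ∈ X | p₂ ≤ x.1.1} with hXRdef
  have hmemX : ∀ x ∈ X, IsSegment P x.1.1 x.1.2 ∧ (x.1.2 ≤ p₁ ∨ p₂ ≤ x.1.1) ∧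
      IsSegment P x.2.1 x.2.2 ∧ p₁ ≤ x.2.1 ∧ x.2.2 ≤ p₂ ∧
      ∃ I ∈ 𝓘,
        (x.1.1 < I.1 ∧ I.1 < x.1.2 ∧ x.2.1 < I.2 ∧ I.2 < x.2.2) ∨
        (x.2.1 < I.1 ∧ I.1 < x.2.2 ∧ x.1.1 < I.2 ∧ I.2 < x.1.2) := by
    intro x hx; rw [hXdef] at hx; exact hx
  have hmemXL : ∀ x ∈ XL, x ∈ X ∧ x.1.2 ≤ p₁ := by
    intro x hx; rw [hXLdef] at hx; exact hx
  have hmemXR : ∀ x ∈ XR, x ∈ X ∧ p₂ ≤ x.1.1 := by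
    intro x hx; rw [hXRdef] at hx; exact hx
  have hmem : ∀ x ∈ X, IsSegment P x.1.1 x.1.2 ∧ IsSegment P x.2.1 x.2.2 ∧
      p₁ ≤ x.2.1 ∧ x.2.2 ≤ p₂ := by
    intro x hx
    obtain ⟨a, _, b, c, d, _⟩ := hmemX x hx
    exact ⟨a, b, c, d⟩
  have hsubLR : X ⊆ XL ∪ XR := by
    intro x hx
    rcases (hmemX x hx).2.1 with h | h
    · left; rw [hXLdef]; exact ⟨hx, h⟩
    · right; rw [hXRdef]; exact ⟨hx, h⟩
  -- witnesses
  have hwL : ∀ x ∈ XL, ∃ I ∈ 𝓘,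
      x.1.1 < I.1 ∧ I.1 < x.1.2 ∧ x.2.1 < I.2 ∧ I.2 < x.2.2 := by
    intro x hx
    obtain ⟨hxX, hle⟩ := hmemXL x hx
    obtain ⟨_, _, _, h2l, _, I, hI, hc⟩ := hmemX x hxX
    rcases hc with h | h
    · exact ⟨I, hI, h⟩
    · exfalso
      have h12 := (h𝓘.mem_Ioo I hI).2.1
      linarith [h.1, h.2.2.2]
  have hwR : ∀ x ∈ XR, ∃ I ∈ 𝓘,
      x.2.1 < I.1 ∧ I.1 < x.2.2 ∧ x.1.1 < I.2 ∧ I.2 < x.1.2 := by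
    intro x hx
    obtain ⟨hxX, hle⟩ := hmemXR x hx
    obtain ⟨_, _, _, _, h2r, I, hI, hc⟩ := hmemX x hxX
    rcases hc with h | h
    · exfalso
      have h12 := (h𝓘.mem_Ioo I hI).2.1
      linarith [h.1, h.2.2.2]
    · exact ⟨I, hI, h⟩
  -- key bounds
  have hkeyL : ∀ x ∈ XL, x.1.2 ∈ P ∧ x.1.2 ≤ p₁ ∧ x.2.1 ∈ P ∧ p₁ ≤ x.2.1 ∧ x.2.1 < p₂ := by
    intro x hx
    obtain ⟨hxX, hle⟩ := hmemXL x hx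
    obtain ⟨hs1, hs2, h2l, h2r⟩ := hmem x hxX
    refine ⟨?_, hle, ?_, h2l, by linarith [hs2.2.2.1]⟩
    · rcases hs1.2.1 with h | h
      · exact h
      · exfalso; linarith
    · rcases hs2.1 with h | h
      · exact h
      · exfalso; linarith
  have hkeyR : ∀ x ∈ XR, x.1.1 ∈ P ∧ p₂ ≤ x.1.1 ∧ x.2.1 ∈ P ∧ p₁ ≤ x.2.1 ∧ x.2.1 < p₂ := by
    intro x hx
    obtain ⟨hxX, hle⟩ := hmemXR x hx
    obtain ⟨hs1, hs2, h2l, h2r⟩ := hmem x hxX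
    refine ⟨?_, hle, ?_, h2l, by linarith [hs2.2.2.1]⟩
    · rcases hs1.1 with h | h
      · exact h
      · exfalso; linarith
    · rcases hs2.1 with h | h
      · exact h
      · exfalso; linarith
  -- shared witness points force equality
  have hsegeq : ∀ x ∈ X, ∀ y ∈ X, ∀ u v : ℝ,
      x.1.1 < u → u < x.1.2 → y.1.1 < u → u < y.1.2 →
      x.2.1 < v → v < x.2.2 → y.2.1 < v → v < y.2.2 → x = y := by
    intro x hx y hy u v h1 h2 h3 h4 h5 h6 h7 h8
    obtain ⟨hs1x, hs2x, _, _⟩ := hmem x hx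
    obtain ⟨hs1y, hs2y, _, _⟩ := hmem y hy
    obtain ⟨e1, e2⟩ := seg_eq hQ0 hs1x hs1y h1 h2 h3 h4
    obtain ⟨e3, e4⟩ := seg_eq hQ0 hs2x hs2y h5 h6 h7 h8
    exact Prod.ext (Prod.ext e1 e2) (Prod.ext e3 e4)
  -- chain property, left
  have hchainL : ∀ x ∈ XL, ∀ y ∈ XL, x ≠ y →
      (x.1.2 ≤ y.1.2 ∧ y.2.1 ≤ x.2.1) ∨ (y.1.2 ≤ x.1.2 ∧ x.2.1 ≤ y.2.1) := by
    intro x hx y hy hne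
    obtain ⟨I, hI, hI1, hI2, hI3, hI4⟩ := hwL x hx
    obtain ⟨J, hJ, hJ1, hJ2, hJ3, hJ4⟩ := hwL y hy
    obtain ⟨hxX, hxle⟩ := hmemXL x hx
    obtain ⟨hyX, hyle⟩ := hmemXL y hy
    obtain ⟨hs1x, hs2x, h2lx, h2rx⟩ := hmem x hxX
    obtain ⟨hs1y, hs2y, h2ly, h2ry⟩ := hmem y hyX
    by_cases hIJ : I = J
    · exfalso
      subst hIJ
      exact hne (hsegeq x hxX y hyX I.1 I.2 hI1 hI2 hJ1 hJ2 hI3 hI4 hJ3 hJ4)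
    have hd := h𝓘.ends_distinct I hI J hJ hIJ
    rcases lt_trichotomy I.1 J.1 with h | h | h
    · have hJI2 : J.2 < I.2 := by
        rcases lt_trichotomy I.2 J.2 with h' | h' | h'
        · exact absurd (Or.inl ⟨h, by linarith, h'⟩) (hno I hI J hJ)
        · exact absurd h' hd.2.2.2
        · exact h'
      exact Or.inl ⟨(seg_mono hQ0 hs1x hs1y hI1 hI2 hJ1 hJ2 h.le).2,
        (seg_mono hQ0 hs2y hs2x hJ3 hJ4 hI3 hI4 hJI2.le).1⟩
    · exact absurd h hd.1
    · have hIJ2 : I.2 < J.2 := by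
        rcases lt_trichotomy J.2 I.2 with h' | h' | h'
        · exact absurd (Or.inl ⟨h, by linarith, h'⟩) (hno J hJ I hI)
        · exact absurd h'.symm hd.2.2.2
        · exact h'
      exact Or.inr ⟨(seg_mono hQ0 hs1y hs1x hJ1 hJ2 hI1 hI2 h.le).2,
        (seg_mono hQ0 hs2x hs2y hI3 hI4 hJ3 hJ4 hIJ2.le).1⟩
  -- chain property, right
  have hchainR : ∀ x ∈ XR, ∀ y ∈ XR, x ≠ y →
      (x.2.1 ≤ y.2.1 ∧ y.1.1 ≤ x.1.1) ∨ (y.2.1 ≤ x.2.1 ∧ x.1.1 ≤ y.1.1) := by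
    intro x hx y hy hne
    obtain ⟨I, hI, hI1, hI2, hI3, hI4⟩ := hwR x hx
    obtain ⟨J, hJ, hJ1, hJ2, hJ3, hJ4⟩ := hwR y hy
    obtain ⟨hxX, hxle⟩ := hmemXR x hx
    obtain ⟨hyX, hyle⟩ := hmemXR y hy
    obtain ⟨hs1x, hs2x, h2lx, h2rx⟩ := hmem x hxX
    obtain ⟨hs1y, hs2y, h2ly, h2ry⟩ := hmem y hyX
    by_cases hIJ : I = J
    · exfalso
      subst hIJ
      exact hne (hsegeq x hxX y hyX I.2 I.1 hI3 hI4 hJ3 hJ4 hI1 hI2 hJ1 hJ2)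
    have hd := h𝓘.ends_distinct I hI J hJ hIJ
    rcases lt_trichotomy I.1 J.1 with h | h | h
    · have hJI2 : J.2 < I.2 := by
        rcases lt_trichotomy I.2 J.2 with h' | h' | h'
        · exact absurd (Or.inl ⟨h, by linarith, h'⟩) (hno I hI J hJ)
        · exact absurd h' hd.2.2.2
        · exact h'
      exact Or.inl ⟨(seg_mono hQ0 hs2x hs2y hI1 hI2 hJ1 hJ2 h.le).1,
        (seg_mono hQ0 hs1y hs1x hJ3 hJ4 hI3 hI4 hJI2.le).1⟩
    · exact absurd h hd.1
    · have hIJ2 : I.2 < J.2 := by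
        rcases lt_trichotomy J.2 I.2 with h' | h' | h'
        · exact absurd (Or.inl ⟨h, by linarith, h'⟩) (hno J hJ I hI)
        · exact absurd h'.symm hd.2.2.2
        · exact h'
      exact Or.inr ⟨(seg_mono hQ0 hs2y hs2x hJ1 hJ2 hI1 hI2 h.le).1,
        (seg_mono hQ0 hs1x hs1y hI3 hI4 hJ3 hJ4 hIJ2.le).1⟩
  -- interaction
  have hLR : ∀ x ∈ XL, ∀ y ∈ XR, x.2.1 ≤ y.2.1 := by
    intro x hx y hy
    obtain ⟨I, hI, hI1, hI2, hI3, hI4⟩ := hwL x hx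
    obtain ⟨J, hJ, hJ1, hJ2, hJ3, hJ4⟩ := hwR y hy
    obtain ⟨hxX, hxle⟩ := hmemXL x hx
    obtain ⟨hyX, hyle⟩ := hmemXR y hy
    obtain ⟨hs1x, hs2x, h2lx, h2rx⟩ := hmem x hxX
    obtain ⟨hs1y, hs2y, h2ly, h2ry⟩ := hmem y hyX
    have hIJ1 : I.1 < J.1 := by linarith
    have hIJ : I ≠ J := fun h => by rw [h] at hIJ1; exact lt_irrefl _ hIJ1
    have hd := h𝓘.ends_distinct I hI J hJ hIJ
    have h24 : I.2 < J.2 := by linarith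
    have hmid : I.2 < J.1 := by
      rcases lt_trichotomy I.2 J.1 with h | h | h
      · exact h
      · exact absurd h hd.2.2.1
      · exact absurd (Or.inl ⟨hIJ1, h, h24⟩) (hno I hI J hJ)
    exact (seg_mono hQ0 hs2x hs2y hI3 hI4 hJ1 hJ2 hmid.le).1
  -- injectivity of keys
  have hinjL : Set.InjOn (fun x : (ℝ × ℝ) × (ℝ × ℝ) => (x.1.2, x.2.1)) XL := by
    intro x hx y hy heq
    obtain ⟨hs1x, hs2x, _, _⟩ := hmem x (hmemXL x hx).1
    obtain ⟨hs1y, hs2y, _, _⟩ := hmem y (hmemXL y hy).1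
    simp only [Prod.mk.injEq] at heq
    obtain ⟨e1, e2⟩ := heq
    have e3 : x.1.1 = y.1.1 := seg_right_unique hQ0 hs1x (e1 ▸ hs1y)
    have e4 : x.2.2 = y.2.2 := seg_left_unique hQ0 hs2x (e2 ▸ hs2y)
    exact Prod.ext (Prod.ext e3 e1) (Prod.ext e2 e4)
  have hinjR : Set.InjOn (fun x : (ℝ × ℝ) × (ℝ × ℝ) => (x.2.1, x.1.1)) XR := by
    intro x hx y hy heq
    obtain ⟨hs1x, hs2x, _, _⟩ := hmem x (hmemXR x hx).1
    obtain ⟨hs1y, hs2y, _, _⟩ := hmem y (hmemXR y hy).1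
    simp only [Prod.mk.injEq] at heq
    obtain ⟨e1, e2⟩ := heq
    have e3 : x.2.2 = y.2.2 := seg_left_unique hQ0 hs2x (e1 ▸ hs2y)
    have e4 : x.1.2 = y.1.2 := seg_left_unique hQ0 hs1x (e2 ▸ hs1y)
    exact Prod.ext (Prod.ext e2 e4) (Prod.ext e1 e3)
  -- finiteness
  have hfinL : XL.Finite := by
    refine Set.Finite.of_finite_image ?_ hinjL
    refine Set.Finite.subset (Finset.finite_toSet (P ×ˢ P)) ?_
    rintro k ⟨x, hx, rfl⟩
    obtain ⟨m1, _, m2, _, _⟩ := hkeyL x hx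
    simp only [Finset.coe_product, Set.mem_prod]
    exact ⟨m1, m2⟩
  have hfinR : XR.Finite := by
    refine Set.Finite.of_finite_image ?_ hinjR
    refine Set.Finite.subset (Finset.finite_toSet (P ×ˢ P)) ?_
    rintro k ⟨x, hx, rfl⟩
    obtain ⟨m1, _, m2, _, _⟩ := hkeyR x hx
    simp only [Finset.coe_product, Set.mem_prod]
    exact ⟨m2, m1⟩
  -- key finsets
  set KL : Finset (ℝ × ℝ) :=
    hfinL.toFinset.image (fun x : (ℝ × ℝ) × (ℝ × ℝ) => (x.1.2, x.2.1)) with hKLdef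
  set KR : Finset (ℝ × ℝ) :=
    hfinR.toFinset.image (fun x : (ℝ × ℝ) × (ℝ × ℝ) => (x.2.1, x.1.1)) with hKRdef
  have hcardL : XL.ncard = KL.card := by
    rw [hKLdef, Finset.card_image_of_injOn (by rw [Set.Finite.coe_toFinset]; exact hinjL),
      ← Set.ncard_coe_finset, Set.Finite.coe_toFinset]
  have hcardR : XR.ncard = KR.card := by
    rw [hKRdef, Finset.card_image_of_injOn (by rw [Set.Finite.coe_toFinset]; exact hinjR),
      ← Set.ncard_coe_finset, Set.Finite.coe_toFinset]
  have hmemKL : ∀ k ∈ KL, ∃ x ∈ XL, (x.1.2, x.2.1) = k := by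
    intro k hk
    rw [hKLdef] at hk
    obtain ⟨x, hx, rfl⟩ := Finset.mem_image.mp hk
    exact ⟨x, (Set.Finite.mem_toFinset _).mp hx, rfl⟩
  have hmemKR : ∀ k ∈ KR, ∃ x ∈ XR, (x.2.1, x.1.1) = k := by
    intro k hk
    rw [hKRdef] at hk
    obtain ⟨x, hx, rfl⟩ := Finset.mem_image.mp hk
    exact ⟨x, (Set.Finite.mem_toFinset _).mp hx, rfl⟩
  have hXfin : X.Finite := Set.Finite.subset (hfinL.union hfinR) hsubLR
  have hXbound : X.ncard ≤ XL.ncard + XR.ncard :=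
    le_trans (Set.ncard_le_ncard hsubLR (hfinL.union hfinR)) (Set.ncard_union_le XL XR)
  rcases Set.eq_empty_or_nonempty XR with hRe | hRne
  ·  -- no right pairs
    have hXsub : X ⊆ XL := by
      intro x hx
      rcases hsubLR hx with h | h
      · exact h
      · rw [hRe] at h; exact absurd h (Set.notMem_empty x)
    have h1 : X.ncard ≤ XL.ncard := Set.ncard_le_ncard hXsub hfinL
    set A : Finset ℝ := P.filter (· ≤ p₁) with hA
    set B : Finset ℝ := P.filter (fun q => p₁ ≤ q ∧ q < p₂) with hB
    have hc := chain_card A B KL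
      (by intro k hk
          obtain ⟨x, hx, rfl⟩ := hmemKL k hk
          obtain ⟨m1, m2, _, _, _⟩ := hkeyL x hx
          exact Finset.mem_filter.mpr ⟨m1, m2⟩)
      (by intro k hk
          obtain ⟨x, hx, rfl⟩ := hmemKL k hk
          obtain ⟨_, _, m3, m4, m5⟩ := hkeyL x hx
          exact Finset.mem_filter.mpr ⟨m3, m4, m5⟩)
      ⟨p₁, Finset.mem_filter.mpr ⟨hp₁, le_rfl⟩⟩
      ⟨p₁, Finset.mem_filter.mpr ⟨hp₁, le_rfl, hlt⟩⟩
      (by intro k hk k' hk' hne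
          obtain ⟨x, hx, rfl⟩ := hmemKL k hk
          obtain ⟨y, hy, rfl⟩ := hmemKL k' hk'
          exact hchainL x hx y hy (fun h => hne (by rw [h])))
    have hunion : A ∪ B ⊆ P := by
      intro q hq
      rcases Finset.mem_union.mp hq with h | h
      · exact Finset.mem_of_mem_filter q h
      · exact Finset.mem_of_mem_filter q h
    have hinter : A ∩ B ⊆ {p₁} := by
      intro q hq
      obtain ⟨h1', h2'⟩ := Finset.mem_inter.mp hq
      have hq1 := (Finset.mem_filter.mp h1').2
      have hq2 := (Finset.mem_filter.mp h2').2.1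
      exact Finset.mem_singleton.mpr (le_antisymm hq1 hq2)
    have e1 := Finset.card_union_add_card_inter A B
    have e2 := Finset.card_le_card hunion
    have e3 := Finset.card_le_card hinter
    simp only [Finset.card_singleton] at e3
    omega
  ·  -- XR nonempty : define sigma
    have hSRne : hfinR.toFinset.Nonempty := (Set.Finite.toFinset_nonempty hfinR).mpr hRne
    set img : Finset ℝ := hfinR.toFinset.image (fun x : (ℝ × ℝ) × (ℝ × ℝ) => x.2.1) with himg
    have himgne : img.Nonempty := hSRne.image _
    obtain ⟨x₀, hx₀, hx₀σ⟩ := Finset.mem_image.mp (img.min'_mem himgne)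
    have hx₀R : x₀ ∈ XR := (Set.Finite.mem_toFinset _).mp hx₀
    obtain ⟨_, _, hσP, hσ1, hσ2⟩ := hkeyR x₀ hx₀R
    have hσle : ∀ y ∈ XR, x₀.2.1 ≤ y.2.1 := by
      intro y hy
      rw [hx₀σ]
      exact img.min'_le _ (Finset.mem_image_of_mem _ ((Set.Finite.mem_toFinset _).mpr hy))
    have hσge : ∀ x ∈ XL, x.2.1 ≤ x₀.2.1 := by
      intro x hx
      exact hLR x hx x₀ hx₀R
    set AL : Finset ℝ := P.filter (· ≤ p₁) with hAL
    set BL : Finset ℝ := P.filter (fun q => p₁ ≤ q ∧ q ≤ x₀.2.1) with hBL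
    set BR : Finset ℝ := P.filter (fun q => x₀.2.1 ≤ q ∧ q < p₂) with hBR
    set AR : Finset ℝ := P.filter (p₂ ≤ ·) with hAR
    have hcL := chain_card AL BL KL
      (by intro k hk
          obtain ⟨x, hx, rfl⟩ := hmemKL k hk
          obtain ⟨m1, m2, _, _, _⟩ := hkeyL x hx
          exact Finset.mem_filter.mpr ⟨m1, m2⟩)
      (by intro k hk
          obtain ⟨x, hx, rfl⟩ := hmemKL k hk
          obtain ⟨_, _, m3, m4, _⟩ := hkeyL x hx
          exact Finset.mem_filter.mpr ⟨m3, m4, hσge x hx⟩)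
      ⟨p₁, Finset.mem_filter.mpr ⟨hp₁, le_rfl⟩⟩
      ⟨p₁, Finset.mem_filter.mpr ⟨hp₁, le_rfl, hσ1⟩⟩
      (by intro k hk k' hk' hne
          obtain ⟨x, hx, rfl⟩ := hmemKL k hk
          obtain ⟨y, hy, rfl⟩ := hmemKL k' hk'
          exact hchainL x hx y hy (fun h => hne (by rw [h])))
    have hcR := chain_card BR AR KR
      (by intro k hk
          obtain ⟨x, hx, rfl⟩ := hmemKR k hk
          obtain ⟨_, _, m3, _, m5⟩ := hkeyR x hx
          exact Finset.mem_filter.mpr ⟨m3, hσle x hx, m5⟩)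
      (by intro k hk
          obtain ⟨x, hx, rfl⟩ := hmemKR k hk
          obtain ⟨m1, m2, _, _, _⟩ := hkeyR x hx
          exact Finset.mem_filter.mpr ⟨m1, m2⟩)
      ⟨x₀.2.1, Finset.mem_filter.mpr ⟨hσP, le_rfl, hσ2⟩⟩
      ⟨p₂, Finset.mem_filter.mpr ⟨hp₂, le_rfl⟩⟩
      (by intro k hk k' hk' hne
          obtain ⟨x, hx, rfl⟩ := hmemKR k hk
          obtain ⟨y, hy, rfl⟩ := hmemKR k' hk'
          exact hchainR x hx y hy (fun h => hne (by rw [h])))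
    -- arithmetic
    set U : Finset ℝ := P.filter (· ≤ x₀.2.1) with hU
    set V : Finset ℝ := P.filter (x₀.2.1 ≤ ·) with hV
    have hULB : AL ∪ BL = U := by
      ext q
      simp only [hAL, hBL, hU, Finset.mem_union, Finset.mem_filter]
      constructor
      · rintro (⟨h1', h2'⟩ | ⟨h1', h2', h3'⟩)
        · exact ⟨h1', by linarith⟩
        · exact ⟨h1', h3'⟩
      · rintro ⟨h1', h2'⟩
        rcases le_total q p₁ with h | h
        · exact Or.inl ⟨h1', h⟩
        · exact Or.inr ⟨h1', h, h2'⟩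
    have hULBi : AL ∩ BL ⊆ {p₁} := by
      intro q hq
      obtain ⟨h1', h2'⟩ := Finset.mem_inter.mp hq
      exact Finset.mem_singleton.mpr
        (le_antisymm (Finset.mem_filter.mp h1').2 (Finset.mem_filter.mp h2').2.1)
    have hVRB : BR ∪ AR = V := by
      ext q
      simp only [hBR, hAR, hV, Finset.mem_union, Finset.mem_filter]
      constructor
      · rintro (⟨h1', h2', h3'⟩ | ⟨h1', h2'⟩)
        · exact ⟨h1', h2'⟩
        · exact ⟨h1', by linarith⟩
      · rintro ⟨h1', h2'⟩
        rcases lt_or_ge q p₂ with h | h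
        · exact Or.inl ⟨h1', h2', h⟩
        · exact Or.inr ⟨h1', h⟩
    have hVRBi : BR ∩ AR = ∅ := by
      rw [Finset.eq_empty_iff_forall_notMem]
      intro q hq
      obtain ⟨h1', h2'⟩ := Finset.mem_inter.mp hq
      have := (Finset.mem_filter.mp h1').2.2
      have := (Finset.mem_filter.mp h2').2
      linarith
    have hUV : U ∪ V = P := by
      ext q
      simp only [hU, hV, Finset.mem_union, Finset.mem_filter]
      constructor
      · rintro (⟨h1', _⟩ | ⟨h1', _⟩) <;> exact h1'
      · intro h
        rcases le_total q x₀.2.1 with h' | h'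
        · exact Or.inl ⟨h, h'⟩
        · exact Or.inr ⟨h, h'⟩
    have hUVi : U ∩ V ⊆ {x₀.2.1} := by
      intro q hq
      obtain ⟨h1', h2'⟩ := Finset.mem_inter.mp hq
      exact Finset.mem_singleton.mpr
        (le_antisymm (Finset.mem_filter.mp h1').2 (Finset.mem_filter.mp h2').2)
    have e1 := Finset.card_union_add_card_inter AL BL
    have e2 := Finset.card_union_add_card_inter BR AR
    have e3 := Finset.card_union_add_card_inter U V
    have e4 := Finset.card_le_card hULBi
    have e5 := Finset.card_le_card hUVi
    rw [hULB] at e1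
    rw [hVRB, hVRBi] at e2
    rw [hUV] at e3
    simp only [Finset.card_singleton, Finset.card_empty] at e4 e5 e2
    omega
end

section
/- Let 𝓘 be an interval system, let k be a positive integer, and let P* be a set of at most 2^k − 1 pillars of 𝓘. Then there exist a total ordering ≺* of P* and a colouring c*: P* → {1,…,k} such that (P*, ≺*, c*) is a pillar assignment and the maximum degree of (P*, ≺*) is at most k. -/
open scoped Classical

private lemma v2_lt {k i : ℕ} (h1 : 1 ≤ i) (h2 : i < 2 ^ k) : i.factorization 2 < k := by
  by_contra h
  push_neg at h
  have hd : 2 ^ k ∣ i := dvd_trans (pow_dvd_pow 2 h) (Nat.ordProj_dvd i 2)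
  have := Nat.le_of_dvd (by omega) hd
  omega

private lemma lca_exists {i j : ℕ} (h1 : 1 ≤ i) (hij : i < j)
    (hv : i.factorization 2 = j.factorization 2) :
    ∃ m, i < m ∧ m < j ∧ i.factorization 2 < m.factorization 2 := by
  set t := i.factorization 2 with ht
  set a := i / 2 ^ t with ha
  set b := j / 2 ^ t with hb
  have hi : 2 ^ t * a = i := Nat.ordProj_mul_ordCompl_eq_self i 2
  have hj : 2 ^ t * b = j := by
    rw [hb, hv]; exact Nat.ordProj_mul_ordCompl_eq_self j 2
  have hao : ¬ 2 ∣ a := Nat.not_dvd_ordCompl Nat.prime_two (by omega)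
  have hbo : ¬ 2 ∣ b := by
    rw [hb, hv]; exact Nat.not_dvd_ordCompl Nat.prime_two (by omega)
  have hpt : 0 < 2 ^ t := Nat.pow_pos (by norm_num)
  have hab : a < b := by
    by_contra h
    push_neg at h
    have : j ≤ i := by rw [← hi, ← hj]; exact Nat.mul_le_mul_left _ h
    omega
  have hab2 : a + 2 ≤ b := by omega
  refine ⟨2 ^ t * (a + 1), ?_, ?_, ?_⟩
  · calc i = 2 ^ t * a := hi.symm
      _ < 2 ^ t * (a + 1) := (Nat.mul_lt_mul_left hpt).mpr (by omega)
  · calc 2 ^ t * (a + 1) < 2 ^ t * b := (Nat.mul_lt_mul_left hpt).mpr (by omega)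
      _ = j := hj
  · have hdvd : 2 ^ (t + 1) ∣ 2 ^ t * (a + 1) := by
      have : 2 ∣ a + 1 := by omega
      obtain ⟨c, hc⟩ := this
      exact ⟨c, by rw [hc]; ring⟩
    have hne : 2 ^ t * (a + 1) ≠ 0 := by positivity
    have := (Nat.Prime.pow_dvd_iff_le_factorization Nat.prime_two hne).mp hdvd
    omega

/-- For any interval system, any `k ≥ 1` and any set `P*` of at most `2^k - 1`
pillars, there are a total ordering of `P*` and a colouring with colours in
`{1, …, k}` forming a pillar assignment of maximum degree at most `k`. -/
theorem exists_pillarAssignment_of_card_le (𝓘 : Finset (ℝ × ℝ))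
    (h𝓘 : IsIntervalSystem 𝓘) (k : ℕ) (hk : 1 ≤ k) (Pstar : Finset ℝ)
    (hpil : ∀ p ∈ Pstar, IsPillar 𝓘 p) (hcard : Pstar.card ≤ 2 ^ k - 1) :
    ∃ (r : ℝ → ℕ) (c : ℝ → ℕ),
      IsPillarAssignment 𝓘 Pstar r c ∧
      (∀ p ∈ Pstar, c p ∈ Finset.Icc 1 k) ∧
      MaxDegLE 𝓘 Pstar r k := by
  classical
  set n := Pstar.card with hn
  set e : Fin n ≃o {x // x ∈ Pstar} := Pstar.orderIsoOfFin rfl with he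
  set idx : ℝ → ℕ := fun p => if h : p ∈ Pstar then ((e.symm ⟨p, h⟩ : Fin n) : ℕ) + 1 else 0
    with hidxdef
  have hidx_mem : ∀ p (hp : p ∈ Pstar), idx p = ((e.symm ⟨p, hp⟩ : Fin n) : ℕ) + 1 := by
    intro p hp; simp [hidxdef, hp]
  have h2k : 2 ≤ 2 ^ k := by
    calc 2 = 2 ^ 1 := rfl
    _ ≤ 2 ^ k := Nat.pow_le_pow_right (by norm_num) hk
  have hidx_lb : ∀ p ∈ Pstar, 1 ≤ idx p := by
    intro p hp; rw [hidx_mem p hp]; omega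
  have hidx_ub : ∀ p ∈ Pstar, idx p ≤ n := by
    intro p hp; rw [hidx_mem p hp]
    have := (e.symm ⟨p, hp⟩).isLt
    omega
  have hidx_lt2k : ∀ p ∈ Pstar, idx p < 2 ^ k := by
    intro p hp
    have := hidx_ub p hp
    omega
  have hidx_mono : ∀ p ∈ Pstar, ∀ q ∈ Pstar, p < q → idx p < idx q := by
    intro p hp q hq hpq
    rw [hidx_mem p hp, hidx_mem q hq]
    have h1 : (⟨p, hp⟩ : {x // x ∈ Pstar}) < ⟨q, hq⟩ := hpq
    have h2 : e.symm ⟨p, hp⟩ < e.symm ⟨q, hq⟩ := by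
      rw [OrderIso.lt_iff_lt]; exact h1
    have := (Fin.lt_def.mp h2)
    omega
  have hidx_inj : ∀ p ∈ Pstar, ∀ q ∈ Pstar, idx p = idx q → p = q := by
    intro p hp q hq hpq
    rcases lt_trichotomy p q with h | h | h
    · exact absurd hpq (Nat.ne_of_lt (hidx_mono p hp q hq h))
    · exact h
    · exact absurd hpq.symm (Nat.ne_of_lt (hidx_mono q hq p hp h))
  have hidx_surj : ∀ m, 1 ≤ m → m ≤ n → ∃ q ∈ Pstar, idx q = m := by
    intro m h1 h2
    have hm : m - 1 < n := by omega
    refine ⟨(e ⟨m - 1, hm⟩ : {x // x ∈ Pstar}), (e ⟨m - 1, hm⟩).2, ?_⟩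
    rw [hidx_mem _ (e ⟨m - 1, hm⟩).2]
    have heta : (⟨(e ⟨m - 1, hm⟩ : {x // x ∈ Pstar}), (e ⟨m - 1, hm⟩).2⟩
        : {x // x ∈ Pstar}) = e ⟨m - 1, hm⟩ := rfl
    rw [heta, OrderIso.symm_apply_apply]
    show m - 1 + 1 = m
    omega
  set dep : ℝ → ℕ := fun p => k - (idx p).factorization 2 with hdepdef
  set rr : ℝ → ℕ := fun p => dep p * 2 ^ k + idx p with hrrdef
  have hv : ∀ p ∈ Pstar, (idx p).factorization 2 < k := fun p hp =>
    v2_lt (hidx_lb p hp) (hidx_lt2k p hp)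
  have hdep_mem : ∀ p ∈ Pstar, 1 ≤ dep p ∧ dep p ≤ k := by
    intro p hp
    have := hv p hp
    simp only [hdepdef]
    omega
  have hr_lt : ∀ p ∈ Pstar, ∀ q ∈ Pstar, dep p < dep q → rr p < rr q := by
    intro p hp q hq h
    have h1 : idx p < 2 ^ k := hidx_lt2k p hp
    have h2 : dep p * 2 ^ k + 2 ^ k ≤ dep q * 2 ^ k := by
      have h3 : (dep p + 1) * 2 ^ k ≤ dep q * 2 ^ k := Nat.mul_le_mul_right _ (by omega)
      rw [add_mul, one_mul] at h3
      exact h3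
    show dep p * 2 ^ k + idx p < dep q * 2 ^ k + idx q
    have h4 : 0 ≤ idx q := Nat.zero_le _
    linarith
  have hr_inj : Set.InjOn rr ↑Pstar := by
    intro p hp q hq hpq
    simp only [Finset.mem_coe] at hp hq
    have hd : dep p = dep q := by
      rcases lt_trichotomy (dep p) (dep q) with h | h | h
      · exact absurd hpq (Nat.ne_of_lt (hr_lt p hp q hq h))
      · exact h
      · exact absurd hpq.symm (Nat.ne_of_lt (hr_lt q hq p hp h))
    apply hidx_inj p hp q hq
    simp only [hrrdef] at hpq
    rw [hd] at hpq
    omega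
  -- key combinatorial lemma
  have hkey : ∀ p₁ ∈ Pstar, ∀ p₂ ∈ Pstar, p₁ < p₂ → dep p₁ = dep p₂ →
      ∃ q ∈ Pstar, p₁ < q ∧ q < p₂ ∧ rr q < rr p₁ ∧ rr q < rr p₂ := by
    intro p₁ hp₁ p₂ hp₂ hlt hdep
    have hij : idx p₁ < idx p₂ := hidx_mono p₁ hp₁ p₂ hp₂ hlt
    have hv1 := hv p₁ hp₁
    have hv2 := hv p₂ hp₂
    have hveq : (idx p₁).factorization 2 = (idx p₂).factorization 2 := by
      simp only [hdepdef] at hdep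
      omega
    obtain ⟨m, hm1, hm2, hm3⟩ := lca_exists (hidx_lb p₁ hp₁) hij hveq
    obtain ⟨q, hqP, hqidx⟩ := hidx_surj m (by omega) (by have := hidx_ub p₂ hp₂; omega)
    have hq1 : p₁ < q := by
      rcases lt_trichotomy p₁ q with h | h | h
      · exact h
      · exfalso; rw [h] at hm1; omega
      · have := hidx_mono q hqP p₁ hp₁ h; omega
    have hq2 : q < p₂ := by
      rcases lt_trichotomy q p₂ with h | h | h
      · exact h
      · exfalso; rw [h] at hqidx; omega
      · have := hidx_mono p₂ hp₂ q hqP h; omega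
    have hdq : dep q < dep p₁ := by
      simp only [hdepdef]
      rw [hqidx]
      omega
    refine ⟨q, hqP, hq1, hq2, hr_lt q hqP p₁ hp₁ hdq, hr_lt q hqP p₂ hp₂ (hdep ▸ hdq)⟩
  -- colouring helper
  have hcol_main : ∀ I₁ I₂ : ℝ × ℝ, Overlap I₁ I₂ → ∀ p₁ p₂,
      AssignedTo Pstar rr I₁ p₁ → AssignedTo Pstar rr I₂ p₂ →
      dep p₁ = dep p₂ → p₁ < p₂ → False := by
    intro I₁ I₂ hov p₁ p₂ h1 h2 hdep hlt
    obtain ⟨hp₁P, hI11, hI12, hmin1⟩ := h1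
    obtain ⟨hp₂P, hI21, hI22, hmin2⟩ := h2
    obtain ⟨q, hqP, hq1, hq2, hrq1, hrq2⟩ := hkey p₁ hp₁P p₂ hp₂P hlt hdep
    have hq : (I₁.1 < q ∧ q < I₁.2) ∨ (I₂.1 < q ∧ q < I₂.2) := by
      rcases hov with ⟨ha, hb, hc⟩ | ⟨ha, hb, hc⟩
      · by_cases hcase : q < I₁.2
        · exact Or.inl ⟨by linarith, hcase⟩
        · push_neg at hcase
          exact Or.inr ⟨by linarith, by linarith⟩
      · exact Or.inl ⟨by linarith, by linarith⟩
    rcases hq with ⟨ha, hb⟩ | ⟨ha, hb⟩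
    · have := hmin1 q hqP ha hb (ne_of_gt hq1)
      omega
    · have := hmin2 q hqP ha hb (ne_of_lt hq2)
      omega
  have hov_symm : ∀ I₁ I₂ : ℝ × ℝ, Overlap I₁ I₂ → Overlap I₂ I₁ := by
    intro I₁ I₂ h
    unfold Overlap at *
    tauto
  refine ⟨rr, dep, ⟨hpil, hr_inj, ?_⟩, ?_, ?_⟩
  · -- colour property
    intro I₁ hI₁ I₂ hI₂ hov p₁ p₂ ha1 ha2 hc
    by_contra hne
    rcases lt_trichotomy p₁ p₂ with h | h | h
    · exact hcol_main I₁ I₂ hov p₁ p₂ ha1 ha2 hc h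
    · exact hne h
    · exact hcol_main I₂ I₁ (hov_symm I₁ I₂ hov) p₂ p₁ ha2 ha1 hc.symm h
  · -- colours in range
    intro p hp
    have := hdep_mem p hp
    rw [Finset.mem_Icc]
    omega
  · -- max degree
    intro s t hseg
    rw [PrecDeg]
    set S : Set ℝ := {p : ℝ | ∃ I ∈ 𝓘,
      ((s < I.1 ∧ I.1 < t) ∨ (s < I.2 ∧ I.2 < t)) ∧ AssignedTo Pstar rr I p} with hSdef
    obtain ⟨hs0, ht1, hst, hsegq⟩ := hseg
    have hSsub : S ⊆ ↑Pstar := by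
      rintro p ⟨I, hI, hend, hass⟩
      exact hass.1
    have hmain2 : ∀ p₁ ∈ S, ∀ p₂ ∈ S, p₁ < p₂ → dep p₁ = dep p₂ → False := by
      intro p₁ hp₁S p₂ hp₂S hlt hdep
      obtain ⟨I₁, hI₁, hend₁, hp₁P, hI11, hI12, hmin1⟩ := hp₁S
      obtain ⟨I₂, hI₂, hend₂, hp₂P, hI21, hI22, hmin2⟩ := hp₂S
      obtain ⟨q, hqP, hq1, hq2, hrq1, hrq2⟩ := hkey p₁ hp₁P p₂ hp₂P hlt hdep
      rcases hsegq q hqP with hside | hside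
      · -- q ≤ s : q lies in I₁
        rcases hend₁ with ⟨he1, he2⟩ | ⟨he1, he2⟩
        · rcases hsegq p₁ hp₁P with h | h
          · linarith
          · linarith
        · have ha : I₁.1 < q := by linarith
          have hb : q < I₁.2 := by linarith
          have := hmin1 q hqP ha hb (ne_of_gt hq1)
          omega
      · -- t ≤ q : q lies in I₂
        rcases hend₂ with ⟨he1, he2⟩ | ⟨he1, he2⟩
        · have ha : I₂.1 < q := by linarith
          have hb : q < I₂.2 := by linarith
          have := hmin2 q hqP ha hb (ne_of_lt hq2)
          omega
        · rcases hsegq p₂ hp₂P with h | h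
          · linarith
          · linarith
    have hInj : Set.InjOn dep S := by
      intro p₁ h₁ p₂ h₂ hd
      by_contra hne
      rcases lt_trichotomy p₁ p₂ with h | h | h
      · exact hmain2 p₁ h₁ p₂ h₂ h hd
      · exact hne h
      · exact hmain2 p₂ h₂ p₁ h₁ h hd.symm
    have himg : dep '' S ⊆ ↑(Finset.Icc 1 k) := by
      rintro _ ⟨p, hp, rfl⟩
      have := hdep_mem p (hSsub hp)
      simp only [Finset.coe_Icc, Set.mem_Icc]
      omega
    calc S.ncard = (dep '' S).ncard := (Set.ncard_image_of_injOn hInj).symm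
      _ ≤ (↑(Finset.Icc 1 k) : Set ℕ).ncard :=
          Set.ncard_le_ncard himg (Finset.Icc 1 k).finite_toSet
      _ = (Finset.Icc 1 k).card := Set.ncard_coe_finset _
      _ ≤ k := by rw [Nat.card_Icc]; omega
end

section
/- Every permutation graph is perfect; in particular, a permutation graph with clique number ω has a proper colouring with ω colours. -/
open scoped Classical

/-- A comparability graph (of a finite strict order) satisfies
`χ = ω` and is `ω`-colourable. -/
lemma comparability_key {V : Type*} [Fintype V] (G : SimpleGraph V)
    (lt : V → V → Prop) (hirr : ∀ v, ¬ lt v v)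
    (htr : ∀ a b c, lt a b → lt b c → lt a c)
    (hAdj : ∀ u v, G.Adj u v ↔ lt u v ∨ lt v u) :
    G.Colorable G.cliqueNum ∧ G.chromaticNumber = (G.cliqueNum : ℕ∞) := by
  have _ : IsTrans V lt := ⟨htr⟩
  have _ : IsIrrefl V lt := ⟨hirr⟩
  have wf : WellFounded lt := Finite.wellFounded_of_trans_of_irrefl lt
  -- height function
  set ht : V → ℕ := wf.fix
    (fun v ih => Finset.univ.sup (fun w => if h : lt w v then ih w h + 1 else 0)) with hht
  have htEq : ∀ v, ht v = Finset.univ.sup (fun w => if h : lt w v then ht w + 1 else 0) := by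
    intro v
    rw [hht, WellFounded.fix_eq]
  have hmono : ∀ w v, lt w v → ht w < ht v := by
    intro w v h
    have : (if h : lt w v then ht w + 1 else 0) ≤ ht v := by
      rw [htEq v]
      exact Finset.le_sup (f := fun w => if h : lt w v then ht w + 1 else 0) (Finset.mem_univ w)
    rw [dif_pos h] at this
    omega
  -- every vertex lies in a chain-clique of size `ht v + 1` below it
  have key : ∀ v : V, ∃ s : Finset V, G.IsClique ↑s ∧ v ∈ s ∧ s.card = ht v + 1 ∧
      ∀ u ∈ s, u = v ∨ lt u v := by
    intro v
    induction v using WellFounded.induction wf with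
    | _ v ih =>
      rcases Nat.eq_zero_or_pos (ht v) with h0 | hpos
      · refine ⟨{v}, ?_, Finset.mem_singleton_self v, by simp [h0], by simp⟩
        simp [SimpleGraph.isClique_iff, Set.Pairwise]
      · -- the sup is attained
        obtain ⟨w, -, hw⟩ := Finset.exists_mem_eq_sup Finset.univ
          ⟨v, Finset.mem_univ v⟩ (fun w => if h : lt w v then ht w + 1 else 0)
        rw [← htEq v] at hw
        have hlt : lt w v := by
          by_contra hc
          rw [dif_neg hc] at hw
          omega
        rw [dif_pos hlt] at hw
        obtain ⟨s, hs, hwmem, hcard, hbelow⟩ := ih w hlt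
        have hvs : v ∉ s := by
          intro hv
          rcases hbelow v hv with rfl | h
          · exact hirr v hlt
          · exact hirr v (htr _ _ _ h hlt)
        refine ⟨insert v s, ?_, Finset.mem_insert_self v s, ?_, ?_⟩
        · rw [Finset.coe_insert]
          refine hs.insert fun b hb _ => ?_
          have hbv : lt b v := by
            rcases hbelow b hb with rfl | h
            · exact hlt
            · exact htr _ _ _ h hlt
          exact (hAdj v b).2 (Or.inr hbv)
        · rw [Finset.card_insert_of_notMem hvs, hcard, hw]
        · intro u hu
          rcases Finset.mem_insert.1 hu with rfl | hu
          · exact Or.inl rfl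
          · rcases hbelow u hu with rfl | h
            · exact Or.inr hlt
            · exact Or.inr (htr _ _ _ h hlt)
  have hlt_clique : ∀ v : V, ht v + 1 ≤ G.cliqueNum := by
    intro v
    obtain ⟨s, hs, -, hcard, -⟩ := key v
    calc ht v + 1 = s.card := hcard.symm
      _ ≤ G.cliqueNum := SimpleGraph.IsClique.card_le_cliqueNum (tc := hs)
  have col : G.Colorable G.cliqueNum := by
    refine ⟨SimpleGraph.Coloring.mk
      (fun v => ⟨ht v, lt_of_lt_of_le (Nat.lt_succ_self _) (hlt_clique v)⟩) ?_⟩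
    intro u v huv
    rcases (hAdj u v).1 huv with h | h
    · exact Fin.ne_of_val_ne (Nat.ne_of_lt (hmono u v h))
    · exact Fin.ne_of_val_ne (Nat.ne_of_gt (hmono v u h))
  refine ⟨col, le_antisymm col.chromaticNumber_le ?_⟩
  obtain ⟨s, hs⟩ := G.exists_isNClique_cliqueNum
  calc (G.cliqueNum : ℕ∞) = (s.card : ℕ∞) := by rw [hs.card_eq]
    _ ≤ G.chromaticNumber := hs.isClique.card_le_chromaticNumber

/-- Every permutation graph is perfect; in particular a permutation graph with
clique number `ω` has a proper colouring with `ω` colours. -/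
theorem permutationGraph_isPerfect {V : Type*} [Fintype V] (G : SimpleGraph V)
    (hG : IsPermutationGraph G) :
    IsPerfect G ∧ G.Colorable G.cliqueNum := by
  obtain ⟨𝓘, hsys, ⟨p, hp, hp2⟩, ⟨e⟩⟩ := hG
  set f : V → ℝ × ℝ := fun v => ((e v : {I // I ∈ 𝓘}) : ℝ × ℝ) with hf
  have hmem : ∀ v : V, f v ∈ 𝓘 := fun v => (e v).2
  -- the strict order underlying the permutation graph
  set lt : V → V → Prop := fun v w => (f v).1 < (f w).1 ∧ (f v).2 < (f w).2 with hltdef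
  have hirr : ∀ v, ¬ lt v v := by intro v h; exact lt_irrefl _ h.1
  have htr : ∀ a b c, lt a b → lt b c → lt a c := by
    intro a b c h1 h2
    exact ⟨h1.1.trans h2.1, h1.2.trans h2.2⟩
  have hAdj : ∀ u v, G.Adj u v ↔ lt u v ∨ lt v u := by
    intro u v
    rw [← e.map_adj_iff]
    show Overlap (f u) (f v) ↔ _
    constructor
    · rintro (⟨h1, h2, h3⟩ | ⟨h1, h2, h3⟩)
      · exact Or.inl ⟨h1, h3⟩
      · exact Or.inr ⟨h1, h3⟩
    · rintro (⟨h1, h3⟩ | ⟨h1, h3⟩)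
      · exact Or.inl ⟨h1, lt_trans (hp2 _ (hmem v)).1 (hp2 _ (hmem u)).2, h3⟩
      · exact Or.inr ⟨h1, lt_trans (hp2 _ (hmem u)).1 (hp2 _ (hmem v)).2, h3⟩
  constructor
  · intro s
    have := comparability_key (G.induce s) (fun a b => lt a.1 b.1)
      (fun a => hirr a.1) (fun a b c h1 h2 => htr a.1 b.1 c.1 h1 h2)
      (fun a b => by simpa using hAdj a.1 b.1)
    exact this.2
  · exact (comparability_key G lt hirr htr hAdj).1
end

section
/- Let P* be a finite set of real numbers with |P*| ≤ 2^k − 1 for a positive integer k. Then there exist a total ordering ≺ of P* and a colouring c: P* → {1,…,k} such that for any two points p₁ ≺-preceding and ≺-succeeding with c(p₁) = c(p₂) and p₁ ≠ p₂, there is a point p ∈ P* with p strictly between p₁ and p₂ (in the real order) and p ≺ p₁ and p ≺ p₂. -/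
open scoped Classical

theorem sep_aux : ∀ (k : ℕ) (Pstar : Finset ℝ), Pstar.card ≤ 2 ^ k - 1 →
    ∃ (r : ℝ → ℕ) (c : ℝ → ℕ), Set.InjOn r ↑Pstar ∧
      (∀ p ∈ Pstar, c p ∈ Finset.Icc 1 k) ∧
      ∀ p₁ ∈ Pstar, ∀ p₂ ∈ Pstar, c p₁ = c p₂ → p₁ ≠ p₂ →
        ∃ p ∈ Pstar, min p₁ p₂ < p ∧ p < max p₁ p₂ ∧ r p < r p₁ ∧ r p < r p₂ := by
  intro k
  induction k with
  | zero =>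
    intro Pstar hcard
    have : Pstar = ∅ := Finset.card_eq_zero.mp (by simpa using hcard)
    subst this
    exact ⟨fun _ => 0, fun _ => 0, by simp, by simp, by simp⟩
  | succ k ih =>
    intro Pstar hcard
    rcases Finset.eq_empty_or_nonempty Pstar with h | h
    · subst h
      exact ⟨fun _ => 0, fun _ => 0, by simp, by simp, by simp⟩
    have hn1 : 1 ≤ Pstar.card := Finset.card_pos.mpr h
    have hpow : 1 ≤ 2 ^ k := Nat.one_le_two_pow
    have hn2 : Pstar.card ≤ 2 * 2 ^ k - 1 := by
      have : (2:ℕ) ^ (k+1) = 2 * 2 ^ k := by ring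
      omega
    -- find a median
    have key : ∃ m ∈ Pstar, (Pstar.filter (fun x => x < m)).card ≤ 2 ^ k - 1 ∧
        (Pstar.filter (fun x => m < x)).card ≤ 2 ^ k - 1 := by
      set n := Pstar.card with hn
      let f := Pstar.orderIsoOfFin (rfl : Pstar.card = n)
      let i : Fin n := ⟨(n - 1) / 2, by omega⟩
      refine ⟨(f i : ℝ), (f i).2, ?_⟩
      have hLimg : Pstar.filter (fun x => x < (f i : ℝ))
          = (Finset.Iio i).image (fun j => (f j : ℝ)) := by
        ext x
        simp only [Finset.mem_filter, Finset.mem_image, Finset.mem_Iio]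
        constructor
        · rintro ⟨hx, hlt⟩
          refine ⟨f.symm ⟨x, hx⟩, ?_, by simp⟩
          have : f (f.symm ⟨x, hx⟩) < f i := by
            rw [f.apply_symm_apply]; exact hlt
          exact f.lt_iff_lt.mp this
        · rintro ⟨j, hj, rfl⟩
          exact ⟨(f j).2, by exact_mod_cast f.lt_iff_lt.mpr hj⟩
      have hLcard : (Pstar.filter (fun x => x < (f i : ℝ))).card = (n - 1) / 2 := by
        rw [hLimg, Finset.card_image_of_injective _ (fun a b hab => by
          have : (f a : Pstar) = (f b : Pstar) := Subtype.ext hab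
          exact f.injective this), Fin.card_Iio]
      have hsplit : (Pstar.filter (fun x => x < (f i : ℝ))).card
          + (Pstar.filter (fun x => ¬ x < (f i : ℝ))).card = n :=
        by rw [Finset.card_filter_add_card_filter_not]
      have hins : Pstar.filter (fun x => ¬ x < (f i : ℝ))
          = insert (f i : ℝ) (Pstar.filter (fun x => (f i : ℝ) < x)) := by
        ext x
        simp only [Finset.mem_filter, Finset.mem_insert, not_lt]
        constructor
        · rintro ⟨hx, hle⟩
          rcases eq_or_lt_of_le hle with h' | h'
          · exact Or.inl h'.symm
          · exact Or.inr ⟨hx, h'⟩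
        · rintro (rfl | ⟨hx, hlt⟩)
          · exact ⟨(f i).2, le_refl _⟩
          · exact ⟨hx, hlt.le⟩
      have hmR : (f i : ℝ) ∉ Pstar.filter (fun x => (f i : ℝ) < x) := by simp
      rw [hins, Finset.card_insert_of_notMem hmR] at hsplit
      omega
    obtain ⟨m, hmP, hLle, hRle⟩ := key
    obtain ⟨rL, cL, hrL, hcL, hsepL⟩ := ih (Pstar.filter (fun x => x < m)) hLle
    obtain ⟨rR, cR, hrR, hcR, hsepR⟩ := ih (Pstar.filter (fun x => m < x)) hRle
    have memL : ∀ x ∈ Pstar, x < m → x ∈ Pstar.filter (fun x => x < m) := by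
      intro x hx hxm; simp [Finset.mem_filter, hx, hxm]
    have memR : ∀ x ∈ Pstar, m < x → x ∈ Pstar.filter (fun x => m < x) := by
      intro x hx hxm; simp [Finset.mem_filter, hx, hxm]
    refine ⟨fun x => if x = m then 0 else if x < m then 2 * rL x + 1 else 2 * rR x + 2,
      fun x => if x = m then k + 1 else if x < m then cL x else cR x, ?_, ?_, ?_⟩
    · -- InjOn
      intro x hx y hy hxy
      rw [Finset.mem_coe] at hx hy
      simp only at hxy
      by_cases hxm : x = m <;> by_cases hym : y = m
      · rw [hxm, hym]
      · rw [if_pos hxm, if_neg hym] at hxy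
        split_ifs at hxy <;> omega
      · rw [if_neg hxm, if_pos hym] at hxy
        split_ifs at hxy <;> omega
      · rw [if_neg hxm, if_neg hym] at hxy
        by_cases hx' : x < m <;> by_cases hy' : y < m
        · rw [if_pos hx', if_pos hy'] at hxy
          exact hrL (memL x hx hx') (memL y hy hy') (by omega)
        · rw [if_pos hx', if_neg hy'] at hxy; omega
        · rw [if_neg hx', if_pos hy'] at hxy; omega
        · rw [if_neg hx', if_neg hy'] at hxy
          have hx'' : m < x := lt_of_le_of_ne (not_lt.mp hx') (Ne.symm hxm)
          have hy'' : m < y := lt_of_le_of_ne (not_lt.mp hy') (Ne.symm hym)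
          exact hrR (memR x hx hx'') (memR y hy hy'') (by omega)
    · -- colours
      intro p hp
      simp only [Finset.mem_Icc]
      by_cases hpm : p = m
      · rw [if_pos hpm]; omega
      · by_cases hp' : p < m
        · have := hcL p (memL p hp hp')
          rw [if_neg hpm, if_pos hp']
          simp only [Finset.mem_Icc] at this; omega
        · have hp'' : m < p := lt_of_le_of_ne (not_lt.mp hp') (Ne.symm hpm)
          have := hcR p (memR p hp hp'')
          rw [if_neg hpm, if_neg hp']
          simp only [Finset.mem_Icc] at this; omega
    · -- separation
      intro p₁ hp₁ p₂ hp₂ hc hne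
      simp only at hc
      have rankpos : ∀ x ∈ Pstar, x ≠ m →
          1 ≤ (if x = m then 0 else if x < m then 2 * rL x + 1 else 2 * rR x + 2) := by
        intro x _ hxm
        rw [if_neg hxm]; split_ifs <;> omega
      have colle : ∀ x ∈ Pstar, x ≠ m →
          (if x = m then k + 1 else if x < m then cL x else cR x) ≤ k := by
        intro x hx hxm
        rw [if_neg hxm]
        by_cases hx' : x < m
        · have := hcL x (memL x hx hx')
          simp only [Finset.mem_Icc] at this; simpa [hx'] using this.2
        · have hx'' : m < x := lt_of_le_of_ne (not_lt.mp hx') (Ne.symm hxm)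
          have := hcR x (memR x hx hx'')
          simp only [Finset.mem_Icc] at this; simpa [hx'] using this.2
      by_cases h1m : p₁ = m
      · exfalso
        have h2m : p₂ ≠ m := by rw [← h1m]; exact hne.symm
        have := colle p₂ hp₂ h2m
        rw [if_pos h1m] at hc; omega
      · by_cases h2m : p₂ = m
        · exfalso
          have := colle p₁ hp₁ h1m
          rw [if_pos h2m] at hc; omega
        by_cases h1 : p₁ < m <;> by_cases h2 : p₂ < m
        · -- both in L
          obtain ⟨p, hpL, hmin, hmax, hr1, hr2⟩ := hsepL p₁ (memL p₁ hp₁ h1)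
            p₂ (memL p₂ hp₂ h2)
            (by rwa [if_neg h1m, if_pos h1, if_neg h2m, if_pos h2] at hc) hne
          rw [Finset.mem_filter] at hpL
          have hpm : p ≠ m := ne_of_lt hpL.2
          refine ⟨p, hpL.1, hmin, hmax, ?_, ?_⟩ <;>
            simp only [if_neg hpm, if_pos hpL.2, if_neg h1m, if_pos h1, if_neg h2m,
              if_pos h2] <;> omega
        · -- p₁ < m < p₂ : use m
          have h2' : m < p₂ := lt_of_le_of_ne (not_lt.mp h2) (Ne.symm h2m)
          refine ⟨m, hmP, ?_, ?_, ?_, ?_⟩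
          · exact lt_of_le_of_lt (min_le_left _ _) h1
          · exact lt_of_lt_of_le h2' (le_max_right _ _)
          · simp only [if_pos rfl]; exact rankpos p₁ hp₁ h1m
          · simp only [if_pos rfl]; exact rankpos p₂ hp₂ h2m
        · have h1' : m < p₁ := lt_of_le_of_ne (not_lt.mp h1) (Ne.symm h1m)
          refine ⟨m, hmP, ?_, ?_, ?_, ?_⟩
          · exact lt_of_le_of_lt (min_le_right _ _) h2
          · exact lt_of_lt_of_le h1' (le_max_left _ _)
          · simp only [if_pos rfl]; exact rankpos p₁ hp₁ h1m
          · simp only [if_pos rfl]; exact rankpos p₂ hp₂ h2m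
        · -- both in R
          have h1' : m < p₁ := lt_of_le_of_ne (not_lt.mp h1) (Ne.symm h1m)
          have h2' : m < p₂ := lt_of_le_of_ne (not_lt.mp h2) (Ne.symm h2m)
          obtain ⟨p, hpR, hmin, hmax, hr1, hr2⟩ := hsepR p₁ (memR p₁ hp₁ h1')
            p₂ (memR p₂ hp₂ h2')
            (by rwa [if_neg h1m, if_neg h1, if_neg h2m, if_neg h2] at hc) hne
          rw [Finset.mem_filter] at hpR
          have hpm : p ≠ m := (ne_of_lt hpR.2).symm
          have hpnl : ¬ p < m := not_lt.mpr hpR.2.le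
          refine ⟨p, hpR.1, hmin, hmax, ?_, ?_⟩ <;>
            simp only [if_neg hpm, if_neg hpnl, if_neg h1m, if_neg h1, if_neg h2m,
              if_neg h2] <;> omega

/-- Separator structure: any finite set `P* ⊆ ℝ` with `|P*| ≤ 2^k - 1` admits a
total order (ranking `r` injective on `P*`) and a colouring `c : P* → {1,…,k}`
such that any two distinct same-coloured points are separated, in the real
order, by a point of `P*` preceding both in the order. -/
theorem exists_separator_order (k : ℕ) (hk : 1 ≤ k) (Pstar : Finset ℝ)
    (hcard : Pstar.card ≤ 2 ^ k - 1) :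
    ∃ (r : ℝ → ℕ) (c : ℝ → ℕ), Set.InjOn r ↑Pstar ∧
      (∀ p ∈ Pstar, c p ∈ Finset.Icc 1 k) ∧
      ∀ p₁ ∈ Pstar, ∀ p₂ ∈ Pstar, c p₁ = c p₂ → p₁ ≠ p₂ →
        ∃ p ∈ Pstar, min p₁ p₂ < p ∧ p < max p₁ p₂ ∧ r p < r p₁ ∧ r p < r p₂ := by
  exact sep_aux k Pstar hcard
end

section
/- Let 𝓘 be an interval system, P a finite set of pillars, ≺ a total order on P, and J an open interval contained in a segment of P. Then the (P,≺)-degree of J is at most the P-degree of J. -/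
open scoped Classical

lemma seg_exists (Q : Finset ℝ) {x : ℝ} (hx0 : 0 < x) (hx1 : x < 1) (hxQ : x ∉ Q) :
    ∃ s t, IsSegment Q s t ∧ s < x ∧ x < t := by
  classical
  set L := Q.filter (fun q => q < x) with hL
  set R := Q.filter (fun q => x < q) with hR
  set s := if h : L.Nonempty then L.max' h else 0 with hs
  set t := if h : R.Nonempty then R.min' h else 1 with ht
  have hsx : s < x := by
    rw [hs]; split_ifs with h
    · exact (Finset.mem_filter.mp (L.max'_mem h)).2
    · exact hx0
  have hxt : x < t := by
    rw [ht]; split_ifs with h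
    · exact (Finset.mem_filter.mp (R.min'_mem h)).2
    · exact hx1
  refine ⟨s, t, ⟨?_, ?_, lt_trans hsx hxt, ?_⟩, hsx, hxt⟩
  · rw [hs]; split_ifs with h
    · exact Or.inl (Finset.filter_subset _ _ (L.max'_mem h))
    · exact Or.inr rfl
  · rw [ht]; split_ifs with h
    · exact Or.inl (Finset.filter_subset _ _ (R.min'_mem h))
    · exact Or.inr rfl
  · intro q hq
    rcases lt_trichotomy q x with hlt | heq | hgt
    · left
      have hqL : q ∈ L := Finset.mem_filter.mpr ⟨hq, hlt⟩
      rw [hs, dif_pos ⟨q, hqL⟩]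
      exact Finset.le_max' _ _ hqL
    · exact absurd (heq ▸ hq) hxQ
    · right
      have hqR : q ∈ R := Finset.mem_filter.mpr ⟨hq, hgt⟩
      rw [ht, dif_pos ⟨q, hqR⟩]
      exact Finset.min'_le _ _ hqR

lemma seg_unique {Q : Finset ℝ} (hQ : ∀ q ∈ Q, 0 ≤ q ∧ q ≤ 1)
    {s t s' t' x : ℝ} (h : IsSegment Q s t) (h' : IsSegment Q s' t')
    (h1 : s < x) (h2 : x < t) (h1' : s' < x) (h2' : x < t') : s = s' ∧ t = t' := by
  obtain ⟨hsQ, htQ, -, hmax⟩ := h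
  obtain ⟨hsQ', htQ', -, hmax'⟩ := h'
  constructor
  · apply le_antisymm
    · rcases hsQ with h0 | h0
      · rcases hmax' s h0 with hh | hh
        · exact hh
        · linarith
      · rcases hsQ' with h0' | h0'
        · linarith [(hQ s' h0').1]
        · linarith
    · rcases hsQ' with h0 | h0
      · rcases hmax s' h0 with hh | hh
        · exact hh
        · linarith
      · rcases hsQ with h0' | h0'
        · linarith [(hQ s h0').1]
        · linarith
  · apply le_antisymm
    · rcases htQ' with h0 | h0
      · rcases hmax t' h0 with hh | hh
        · linarith
        · exact hh
      · rcases htQ with h0' | h0'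
        · linarith [(hQ t h0').2]
        · linarith
    · rcases htQ with h0 | h0
      · rcases hmax' t h0 with hh | hh
        · linarith
        · exact hh
      · rcases htQ' with h0' | h0'
        · linarith [(hQ t' h0').2]
        · linarith

lemma assigned_unique_s14 {P : Finset ℝ} {r : ℝ → ℕ} {u v s t : ℝ}
    (h1 : IsSegment P u v) (h2 : IsSegment P s t)
    {I I' : ℝ × ℝ} (hI : u < I.1 ∧ I.1 < v ∧ s < I.2 ∧ I.2 < t)
    (hI' : u < I'.1 ∧ I'.1 < v ∧ s < I'.2 ∧ I'.2 < t)
    {p p' : ℝ} (hp : AssignedTo P r I p) (hp' : AssignedTo P r I' p') : p = p' := by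
  by_contra hne
  have hpv : v ≤ p := by
    rcases h1.2.2.2 p hp.1 with hh | hh
    · linarith [hp.2.1, hI.1]
    · exact hh
  have hps : p ≤ s := by
    rcases h2.2.2.2 p hp.1 with hh | hh
    · exact hh
    · linarith [hp.2.2.1, hI.2.2.2]
  have hpv' : v ≤ p' := by
    rcases h1.2.2.2 p' hp'.1 with hh | hh
    · linarith [hp'.2.1, hI'.1]
    · exact hh
  have hps' : p' ≤ s := by
    rcases h2.2.2.2 p' hp'.1 with hh | hh
    · exact hh
    · linarith [hp'.2.2.1, hI'.2.2.2]
  have r1 : r p < r p' := hp.2.2.2 p' hp'.1 (by linarith [hI.2.1]) (by linarith [hI.2.2.1])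
    (fun hh => hne hh.symm)
  have r2 : r p' < r p := hp'.2.2.2 p hp.1 (by linarith [hI'.2.1]) (by linarith [hI'.2.2.1]) hne
  omega

/-- Auxiliary predicate for the injection in `precDeg_le_pDeg`. -/
def GoodPair (𝓘 : Finset (ℝ × ℝ)) (P : Finset ℝ) (r : ℝ → ℕ) (a b : ℝ)
    (p : ℝ) (x : (ℝ × ℝ) × (ℝ × ℝ)) : Prop :=
  IsSegment P x.1.1 x.1.2 ∧ ∃ I ∈ 𝓘, AssignedTo P r I p ∧
    ((x.1.1 < I.1 ∧ I.1 < x.1.2 ∧ a < I.2 ∧ I.2 < b ∧ x.1.2 ≤ a) ∨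
     (x.1.1 < I.2 ∧ I.2 < x.1.2 ∧ a < I.1 ∧ I.1 < b ∧ b ≤ x.1.1))

/-- The `(P,≺)`-degree of an open interval `J = (a,b)` contained in a segment
of `P` is at most the `P`-degree of `J`. -/
theorem precDeg_le_pDeg (𝓘 : Finset (ℝ × ℝ)) (h𝓘 : IsIntervalSystem 𝓘)
    (P : Finset ℝ) (hP : ∀ p ∈ P, IsPillar 𝓘 p) (r : ℝ → ℕ)
    (hr : Set.InjOn r ↑P) (a b : ℝ) (hab : a < b)
    (hseg : ∃ s t, IsSegment P s t ∧ s ≤ a ∧ b ≤ t) :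
    PrecDeg 𝓘 P r a b ≤ PDeg 𝓘 P a b := by
  classical
  obtain ⟨s, t, hst, hsa, hbt⟩ := hseg
  have hP01 : ∀ p ∈ P, 0 < p ∧ p < 1 := fun p hpp => ⟨(hP p hpp).1, (hP p hpp).2.1⟩
  have ha0 : 0 ≤ a := by
    rcases hst.1 with h | h
    · linarith [(hP01 s h).1]
    · linarith
  have hb1 : b ≤ 1 := by
    rcases hst.2.1 with h | h
    · linarith [(hP01 t h).2]
    · linarith
  have hP01' : ∀ q ∈ P, 0 ≤ q ∧ q ≤ 1 :=
    fun q hq => ⟨le_of_lt (hP01 q hq).1, le_of_lt (hP01 q hq).2⟩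
  have hQ'01 : ∀ q ∈ P ∪ {a, b}, 0 ≤ q ∧ q ≤ 1 := by
    intro q hq
    rcases Finset.mem_union.mp hq with h | h
    · exact hP01' q h
    · rcases Finset.mem_insert.mp h with rfl | h
      · exact ⟨ha0, by linarith⟩
      · rw [Finset.mem_singleton] at h
        subst h
        exact ⟨by linarith, hb1⟩
  have hPmax : ∀ q ∈ P, q ≤ a ∨ b ≤ q := by
    intro q hq
    rcases hst.2.2.2 q hq with h | h
    · exact Or.inl (by linarith)
    · exact Or.inr (by linarith)
  have habseg : IsSegment (P ∪ {a, b}) a b := by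
    refine ⟨Or.inl (by simp), Or.inl (by simp), hab, ?_⟩
    intro q hq
    rcases Finset.mem_union.mp hq with h | h
    · exact hPmax q h
    · rcases Finset.mem_insert.mp h with rfl | h
      · exact Or.inl le_rfl
      · rw [Finset.mem_singleton] at h
        subst h
        exact Or.inr le_rfl
  set A : Set ℝ := {p : ℝ | ∃ I ∈ 𝓘,
    ((a < I.1 ∧ I.1 < b) ∨ (a < I.2 ∧ I.2 < b)) ∧ AssignedTo P r I p} with hA
  set B : Set ((ℝ × ℝ) × (ℝ × ℝ)) := {x : (ℝ × ℝ) × (ℝ × ℝ) |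
    IsSegment P x.1.1 x.1.2 ∧ (x.1.2 ≤ a ∨ b ≤ x.1.1) ∧
    IsSegment (P ∪ {a, b}) x.2.1 x.2.2 ∧ a ≤ x.2.1 ∧ x.2.2 ≤ b ∧
    ∃ I ∈ 𝓘,
      (x.1.1 < I.1 ∧ I.1 < x.1.2 ∧ x.2.1 < I.2 ∧ I.2 < x.2.2) ∨
      (x.2.1 < I.1 ∧ I.1 < x.2.2 ∧ x.1.1 < I.2 ∧ I.2 < x.1.2)} with hB
  -- Every pillar in A maps to a good pair in B
  have hmain : ∀ p ∈ A, ∃ x ∈ B, GoodPair 𝓘 P r a b p x := by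
    intro p hp
    obtain ⟨I, hI𝓘, hend, hassign⟩ := hp
    have hpP : p ∈ P := hassign.1
    have hI1p : I.1 < p := hassign.2.1
    have hpI2 : p < I.2 := hassign.2.2.1
    have hIoo := h𝓘.mem_Ioo I hI𝓘
    rcases hPmax p hpP with hpa | hbp
    · -- p ≤ a : far endpoint is I.1
      have hI2ab : a < I.2 ∧ I.2 < b := by
        rcases hend with h | h
        · exact absurd h.1 (by linarith)
        · exact h
      have hI1P : I.1 ∉ P := fun h => ((hP I.1 h).2.2 I hI𝓘).1 rfl
      obtain ⟨u, v, huv, huI, hIv⟩ := seg_exists P hIoo.1 (by linarith [hIoo.2.1, hIoo.2.2]) hI1P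
      have hvp : v ≤ p := by
        rcases huv.2.2.2 p hpP with hh | hh
        · linarith
        · exact hh
      have hva : v ≤ a := le_trans hvp hpa
      refine ⟨((u, v), (a, b)), ?_, ?_⟩
      · exact ⟨huv, Or.inl hva, habseg, le_rfl, le_rfl, I, hI𝓘,
          Or.inl ⟨huI, hIv, hI2ab.1, hI2ab.2⟩⟩
      · exact ⟨huv, I, hI𝓘, hassign, Or.inl ⟨huI, hIv, hI2ab.1, hI2ab.2, hva⟩⟩
    · -- b ≤ p : far endpoint is I.2
      have hI1ab : a < I.1 ∧ I.1 < b := by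
        rcases hend with h | h
        · exact h
        · exact absurd h.2 (by linarith)
      have hI2P : I.2 ∉ P := fun h => ((hP I.2 h).2.2 I hI𝓘).2 rfl
      obtain ⟨u, v, huv, huI, hIv⟩ := seg_exists P (by linarith [hIoo.1, hIoo.2.1]) hIoo.2.2 hI2P
      have hpu : p ≤ u := by
        rcases huv.2.2.2 p hpP with hh | hh
        · exact hh
        · linarith
      have hbu : b ≤ u := le_trans hbp hpu
      refine ⟨((u, v), (a, b)), ?_, ?_⟩
      · exact ⟨huv, Or.inr hbu, habseg, le_rfl, le_rfl, I, hI𝓘,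
          Or.inr ⟨hI1ab.1, hI1ab.2, huI, hIv⟩⟩
      · exact ⟨huv, I, hI𝓘, hassign, Or.inr ⟨huI, hIv, hI1ab.1, hI1ab.2, hbu⟩⟩
  -- B is finite
  have hBfin : B.Finite := by
    have hsub : B ⊆ ⋃ I ∈ (𝓘 : Finset (ℝ × ℝ)), {x : (ℝ × ℝ) × (ℝ × ℝ) |
        IsSegment P x.1.1 x.1.2 ∧ IsSegment (P ∪ {a, b}) x.2.1 x.2.2 ∧
        ((x.1.1 < I.1 ∧ I.1 < x.1.2 ∧ x.2.1 < I.2 ∧ I.2 < x.2.2) ∨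
         (x.2.1 < I.1 ∧ I.1 < x.2.2 ∧ x.1.1 < I.2 ∧ I.2 < x.1.2))} := by
      rintro x ⟨hx1, -, hx3, -, -, I, hI𝓘, hI⟩
      exact Set.mem_biUnion hI𝓘 ⟨hx1, hx3, hI⟩
    refine Set.Finite.subset (Set.Finite.biUnion 𝓘.finite_toSet ?_) hsub
    intro I hI𝓘
    set g : (ℝ × ℝ) × (ℝ × ℝ) → Bool := fun x =>
      decide (x.1.1 < I.1 ∧ I.1 < x.1.2 ∧ x.2.1 < I.2 ∧ I.2 < x.2.2) with hg
    refine Set.Finite.of_finite_image (f := g) ((Set.finite_univ (α := Bool)).subset (Set.subset_univ _)) ?_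
    intro x hx y hy hxy
    obtain ⟨hx1, hx2, hx3⟩ := hx
    obtain ⟨hy1, hy2, hy3⟩ := hy
    rw [hg] at hxy
    simp only [decide_eq_decide] at hxy
    by_cases hcase : x.1.1 < I.1 ∧ I.1 < x.1.2 ∧ x.2.1 < I.2 ∧ I.2 < x.2.2
    · have hcase' := hxy.mp hcase
      have e1 := seg_unique hP01' hx1 hy1 hcase.1 hcase.2.1 hcase'.1 hcase'.2.1
      have e2 := seg_unique hQ'01 hx2 hy2 hcase.2.2.1 hcase.2.2.2 hcase'.2.2.1 hcase'.2.2.2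
      exact Prod.ext (Prod.ext e1.1 e1.2) (Prod.ext e2.1 e2.2)
    · have hx3' := hx3.resolve_left hcase
      have hy3' := hy3.resolve_left (fun h => hcase (hxy.mpr h))
      have e1 := seg_unique hP01' hx1 hy1 hx3'.2.2.1 hx3'.2.2.2 hy3'.2.2.1 hy3'.2.2.2
      have e2 := seg_unique hQ'01 hx2 hy2 hx3'.1 hx3'.2.1 hy3'.1 hy3'.2.1
      exact Prod.ext (Prod.ext e1.1 e1.2) (Prod.ext e2.1 e2.2)
  -- choose the injection
  have hchoice : ∀ p : ℝ, ∃ x : (ℝ × ℝ) × (ℝ × ℝ),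
      p ∈ A → x ∈ B ∧ GoodPair 𝓘 P r a b p x := by
    intro p
    by_cases hp : p ∈ A
    · obtain ⟨x, hx1, hx2⟩ := hmain p hp
      exact ⟨x, fun _ => ⟨hx1, hx2⟩⟩
    · exact ⟨((0, 0), (0, 0)), fun h => absurd h hp⟩
  choose f hf using hchoice
  have hinj : Set.InjOn f A := by
    intro p hp p' hp' heq
    obtain ⟨-, hgood⟩ := hf p hp
    obtain ⟨-, hgood'⟩ := hf p' hp'
    rw [heq] at hgood
    obtain ⟨huv, I, hI𝓘, hassign, hcase⟩ := hgood
    obtain ⟨-, I', hI𝓘', hassign', hcase'⟩ := hgood'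
    rcases hcase with h | h <;> rcases hcase' with h' | h'
    · exact assigned_unique_s14 huv hst
        ⟨h.1, h.2.1, by linarith [h.2.2.1], by linarith [h.2.2.2.1]⟩
        ⟨h'.1, h'.2.1, by linarith [h'.2.2.1], by linarith [h'.2.2.2.1]⟩ hassign hassign'
    · linarith [huv.2.2.1, h.2.2.2.2, h'.2.2.2.2]
    · linarith [huv.2.2.1, h.2.2.2.2, h'.2.2.2.2]
    · exact assigned_unique_s14 hst huv
        ⟨by linarith [h.2.2.1], by linarith [h.2.2.2.1], h.1, h.2.1⟩
        ⟨by linarith [h'.2.2.1], by linarith [h'.2.2.2.1], h'.1, h'.2.1⟩ hassign hassign'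
  have hmaps : ∀ p ∈ A, f p ∈ B := fun p hp => (hf p hp).1
  exact Set.ncard_le_ncard_of_injOn f hmaps hinj hBfin
end

section
/- Let 𝓘 be an interval system, P a finite set of pillars with total order ≺, and c a colouring of P such that whenever two overlapping intervals are assigned to pillars p₁, p₂ with c(p₁) = c(p₂), then p₁ = p₂. Then for each colour k, every connected component of the subgraph of the overlap graph induced by intervals assigned to pillars of colour k consists of intervals all containing a common pillar of P. -/
open scoped Classical

/-- Under a pillar assignment, every connected component of the subgraph of the
overlap graph induced by the intervals assigned to pillars of colour `k`
consists of intervals all containing a common pillar of `P`. -/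
theorem component_has_common_pillar (𝓘 : Finset (ℝ × ℝ))
    (h𝓘 : IsIntervalSystem 𝓘) (P : Finset ℝ) (r : ℝ → ℕ) (c : ℝ → ℕ)
    (hPA : IsPillarAssignment 𝓘 P r c) (k : ℕ) :
    ∀ v : {I : {I // I ∈ 𝓘} // I ∈ {I | ∃ p, AssignedTo P r I.1 p ∧ c p = k}},
      ∃ q ∈ P,
        ∀ w, ((overlapGraph 𝓘).induce
            {I | ∃ p, AssignedTo P r I.1 p ∧ c p = k}).Reachable v w →
          w.1.1.1 < q ∧ q < w.1.1.2 := by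
  intro v
  obtain ⟨p, hp, hpk⟩ := v.2
  refine ⟨p, hp.1, ?_⟩
  have key : ∀ u w : {I : {I // I ∈ 𝓘} // I ∈ {I | ∃ p, AssignedTo P r I.1 p ∧ c p = k}},
      ((overlapGraph 𝓘).induce {I | ∃ p, AssignedTo P r I.1 p ∧ c p = k}).Walk u w →
      AssignedTo P r u.1.1 p → AssignedTo P r w.1.1 p := by
    intro u w wk
    induction wk with
    | nil => exact id
    | @cons a b d hadj q ih =>
      intro ha
      obtain ⟨p₂, hp₂, hp₂k⟩ := b.2
      have hov : Overlap a.1.1 b.1.1 := hadj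
      have hpe : p = p₂ :=
        hPA.colour a.1.1 a.1.2 b.1.1 b.1.2 hov p p₂ ha hp₂ (by rw [hpk, hp₂k])
      exact ih (hpe ▸ hp₂)
  intro w hw
  obtain ⟨wk⟩ := hw
  have := key v w wk hp
  exact ⟨this.2.1, this.2.2.1⟩
end
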